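/- arXiv:1909.02089 — 9 statements merged into one kernel-verified Lean document; each statement's English description precedes it below -/
import Mathlib

section
/- Let r be a positive integer, let δ ≥ 0, and let M be an m×m matrix over an arbitrary field which has more than δm^{2r} full-rank r×r submatrices (i.e., more than δm^{2r} pairs of an r-element set of row indices and an r-element set of column indices for which the corresponding r×r submatrix is invertible). Then any matrix obtained from M by changing at most δm² entries has rank at least r. -/
/-!
If `M'` had rank `< r`, no full-rank `r × r` submatrix of `M` could survive unchanged in `M'`, so
each of the more than `δ m^(2r)` such index pairs `(S, T)` would contain a changed entry. But a
fixed entry `(i, j)` lies in at most `m^(r-1) · m^(r-1)` pairs, so the at most `δ m²` changed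
entries account for at most `δ m^(2r)` pairs.
-/

open Finset

lemma Matrix.exists_ne_of_rank_lt_rank_submatrix {R α β ι κ : Type*} [CommSemiring R]
    [StrongRankCondition R] [Fintype β] [Fintype ι] [Fintype κ] {M M' : Matrix α β R}
    (f : ι → α) (g : κ → β)
    (h : M'.rank < (M.submatrix f g).rank) : ∃ i j, M' (f i) (g j) ≠ M (f i) (g j) := by
  by_contra! hagree
  have hsub : M.submatrix f g = M'.submatrix f g := Matrix.ext fun i j => (hagree i j).symm
  exact h.not_ge (hsub ▸ M'.rank_submatrix_le f g)

section Counting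

variable {α β : Type*} [Fintype α] [Fintype β] [DecidableEq α] [DecidableEq β]

lemma card_powersetCard_filter_mem_le (a : α) (r : ℕ) :
    #{s ∈ powersetCard r (univ : Finset α) | a ∈ s} ≤ Fintype.card α ^ (r - 1) := by
  calc #{s ∈ powersetCard r (univ : Finset α) | a ∈ s}
      ≤ #(powersetCard (r - 1) (univ : Finset α)) := by
        refine card_le_card_of_injOn (·.erase a) (fun s hs => ?_) (fun s hs t ht hst => ?_)
        · simp only [mem_coe, mem_filter, mem_powersetCard] at hs
          simp [card_erase_of_mem hs.2, hs.1.2]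
        · simp only [mem_coe, mem_filter] at hs ht
          rw [← insert_erase hs.2, ← insert_erase ht.2]
          exact congrArg _ hst
    _ ≤ Fintype.card α ^ (r - 1) := by
        rw [card_powersetCard, card_univ]
        exact Nat.choose_le_pow _ _

lemma card_filter_exists_mem_prod_le (D : Finset (α × β)) (r : ℕ) :
    #{p ∈ powersetCard r (univ : Finset α) ×ˢ powersetCard r (univ : Finset β) |
        ∃ x ∈ D, x.1 ∈ p.1 ∧ x.2 ∈ p.2} ≤
      #D * (Fintype.card α ^ (r - 1) * Fintype.card β ^ (r - 1)) := by
  calc _ ≤ #(D.biUnion fun x => {s ∈ powersetCard r (univ : Finset α) | x.1 ∈ s} ×ˢ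
              {t ∈ powersetCard r (univ : Finset β) | x.2 ∈ t}) := by
        refine card_le_card fun p hp => ?_
        obtain ⟨hp, x, hx, h1, h2⟩ := mem_filter.1 hp
        rw [mem_product] at hp
        exact mem_biUnion.2
          ⟨x, hx, mem_product.2 ⟨mem_filter.2 ⟨hp.1, h1⟩, mem_filter.2 ⟨hp.2, h2⟩⟩⟩
    _ ≤ ∑ x ∈ D, #({s ∈ powersetCard r (univ : Finset α) | x.1 ∈ s} ×ˢ
              {t ∈ powersetCard r (univ : Finset β) | x.2 ∈ t}) := card_biUnion_le
    _ ≤ ∑ _x ∈ D, Fintype.card α ^ (r - 1) * Fintype.card β ^ (r - 1) := by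
        refine sum_le_sum fun x _ => ?_
        rw [card_product]
        exact Nat.mul_le_mul (card_powersetCard_filter_mem_le _ _)
          (card_powersetCard_filter_mem_le _ _)
    _ = _ := by rw [sum_const, smul_eq_mul]

lemma ncard_rank_submatrix_eq_le_of_rank_lt {R : Type*} [CommSemiring R]
    [StrongRankCondition R] [DecidableEq R] {M M' : Matrix α β R} {r : ℕ} (h : M'.rank < r) :
    {p : Finset α × Finset β | #p.1 = r ∧ #p.2 = r ∧
        (M.submatrix (Subtype.val : p.1 → α) (Subtype.val : p.2 → β)).rank = r}.ncard ≤
      #{x : α × β | M' x.1 x.2 ≠ M x.1 x.2} *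
        (Fintype.card α ^ (r - 1) * Fintype.card β ^ (r - 1)) := by
  refine le_trans ?_ (card_filter_exists_mem_prod_le _ r)
  rw [← Set.ncard_coe_finset]
  refine Set.ncard_le_ncard (fun ⟨S, T⟩ ⟨hS, hT, hrank⟩ => ?_) (Finset.finite_toSet _)
  obtain ⟨i, j, hij⟩ := Matrix.exists_ne_of_rank_lt_rank_submatrix _ _ (hrank ▸ h)
  simp only [coe_filter, mem_product, mem_powersetCard, subset_univ, true_and]
  exact ⟨⟨hS, hT⟩, (i, j), mem_filter.2 ⟨mem_univ _, hij⟩, i.2, j.2⟩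

end Counting

theorem statement4_general {𝔽 : Type*} [Field 𝔽] (r : ℕ) (hr : 0 < r) (δ : ℝ)
    (m : ℕ) (M : Matrix (Fin m) (Fin m) 𝔽)
    -- `M` has more than `δ · m^(2r)` full-rank `r × r` submatrices
    (hM : δ * (m : ℝ) ^ (2 * r) <
      (Nat.card {p : Finset (Fin m) × Finset (Fin m) |
        p.1.card = r ∧ p.2.card = r ∧
        (M.submatrix (Subtype.val : {i // i ∈ p.1} → Fin m)
          (Subtype.val : {j // j ∈ p.2} → Fin m)).rank = r} : ℝ))
    -- `M'` is obtained from `M` by changing at most `δ · m²` entries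
    (M' : Matrix (Fin m) (Fin m) 𝔽)
    (hM' : (Nat.card {ij : Fin m × Fin m | M' ij.1 ij.2 ≠ M ij.1 ij.2} : ℝ) ≤ δ * (m : ℝ) ^ 2) :
    r ≤ M'.rank := by
  classical
  by_contra! hlow
  have hcount := ncard_rank_submatrix_eq_le_of_rank_lt (M := M) hlow
  rw [← Nat.card_coe_set_eq, Fintype.card_fin] at hcount
  rw [Nat.card_coe_set_eq, Set.ncard_eq_toFinset_card', Set.toFinset_ofPred] at hM'
  refine hM.not_ge ?_
  calc _ ≤ (#{x : Fin m × Fin m | M' x.1 x.2 ≠ M x.1 x.2} : ℝ) * m ^ (2 * (r - 1)) := by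
        rw [pow_mul', sq]; exact_mod_cast hcount
    _ ≤ δ * (m : ℝ) ^ 2 * (m : ℝ) ^ (2 * (r - 1)) := by gcongr
    _ = δ * (m : ℝ) ^ (2 * r) := by rw [mul_assoc, ← pow_add]; congr 2; omega

theorem statement4 {𝔽 : Type*} [Field 𝔽] (r : ℕ) (hr : 0 < r) (δ : ℝ) (hδ : 0 ≤ δ)
    (m : ℕ) (M : Matrix (Fin m) (Fin m) 𝔽)
    -- `M` has more than `δ · m^(2r)` full-rank `r × r` submatrices
    (hM : δ * (m : ℝ) ^ (2 * r) <
      (Nat.card {p : Finset (Fin m) × Finset (Fin m) |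
        p.1.card = r ∧ p.2.card = r ∧
        (M.submatrix (Subtype.val : {i // i ∈ p.1} → Fin m)
          (Subtype.val : {j // j ∈ p.2} → Fin m)).rank = r} : ℝ))
    -- `M'` is obtained from `M` by changing at most `δ · m²` entries
    (M' : Matrix (Fin m) (Fin m) 𝔽)
    (hM' : (Nat.card {ij : Fin m × Fin m | M' ij.1 ij.2 ≠ M ij.1 ij.2} : ℝ) ≤ δ * (m : ℝ) ^ 2) :
    r ≤ M'.rank :=
  statement4_general r hr δ m M hM M' hM'
end

section
/- Fix an integer r ≥ 1 and δ > 0. There exist constants c > 0 and K, depending only on r and δ, such that the following holds for all n. Suppose M ∈ ℝ^{r×n} is a δ-non-degenerate matrix with ‖M‖∞ ≤ 1. Then, for a uniformly random subset I ⊆ [n], with probability at least 1 − K·e^{−cn}, the matrix M_I is (δ/3)-non-degenerate. -/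
/-!
Take a finite `ε`-net `T` of the unit sphere, `ε = 2δ / (3(r + 1))`. For `t ∈ T` let `S_t` be the
set of columns `w` with `|⟨w, t⟩| ≥ δ`; non-degeneracy gives `|S_t| ≥ δn`, and as the entries are
bounded by `1`, every column of `S_t` has `|⟨w, e⟩| ≥ δ/3` whenever `e` is `ε`-close to `t`. Hence
`M_I` can fail to be `(δ/3)`-non-degenerate only if `|I ∩ S_t| < δn/3` for some `t ∈ T`. Bounding
the indicator of `|I ∩ S| < y` by `2^y 2^(-|I ∩ S|)` and summing over all `I` shows that at most
`2^y (3/4)^|S| 2^n ≤ (27/32)^(δn/3) 2^n` sets are bad for a given `t`; a union bound over `T`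
finishes the proof with `K = |T|`.
-/

/-- An `r × n` real matrix `M'` is `δ`-non-degenerate if for every Euclidean unit vector
`e ∈ ℝ^r` there are at least `δn` columns `w` of `M'` with `|⟨w,e⟩| ≥ δ`. -/
def NonDeg {r n : ℕ} (δ : ℝ) (M' : Matrix (Fin r) (Fin n) ℝ) : Prop :=
  ∀ e : Fin r → ℝ, ∑ i, e i ^ 2 = 1 →
    δ * n ≤ (Nat.card {j : Fin n | δ ≤ |∑ i, M' i j * e i|} : ℝ)

open Finset Real

section SubsetCounting

variable {α : Type*} [Fintype α] [DecidableEq α]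

lemma sum_half_pow_card_inter (S : Finset α) :
    ∑ I : Finset α, (1 / 2 : ℝ) ^ #(I ∩ S) = 2 ^ Fintype.card α * (3 / 4) ^ #S := by
  have hprod := Finset.prod_add (fun i => if i ∈ S then (1 / 2 : ℝ) else 1) 1 univ
  simp only [Pi.one_apply, prod_const_one, mul_one, prod_ite_mem, prod_const] at hprod
  rw [← powerset_univ, ← hprod]
  simp only [ite_add, prod_ite, prod_const, filter_mem_eq_inter, univ_inter, filter_not,
    card_univ_sdiff]
  have hS : #S ≤ Fintype.card α := card_le_univ S
  rw [show Fintype.card α = #S + (Fintype.card α - #S) by omega, pow_add, Nat.add_sub_cancel_left]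
  rw [mul_right_comm, ← mul_pow]
  norm_num

lemma card_filter_card_inter_lt_le (S : Finset α) (y : ℝ) :
    (#{I : Finset α | (#(I ∩ S) : ℝ) < y} : ℝ) ≤ 2 ^ y * 2 ^ Fintype.card α * (3 / 4) ^ #S := by
  have hterm : ∀ k : ℕ, (k : ℝ) < y → 1 ≤ 2 ^ y * (1 / 2 : ℝ) ^ k := by
    intro k hk
    rw [one_div, inv_pow, ← Real.rpow_natCast, ← div_eq_mul_inv, ← Real.rpow_sub two_pos]
    exact Real.one_le_rpow one_le_two (by linarith)
  calc (#{I : Finset α | (#(I ∩ S) : ℝ) < y} : ℝ)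
      = ∑ I with (#(I ∩ S) : ℝ) < y, (1 : ℝ) := by rw [sum_const, nsmul_one]
    _ ≤ ∑ I with (#(I ∩ S) : ℝ) < y, 2 ^ y * (1 / 2 : ℝ) ^ #(I ∩ S) :=
        sum_le_sum fun I hI => hterm _ (mem_filter.1 hI).2
    _ ≤ ∑ I : Finset α, 2 ^ y * (1 / 2 : ℝ) ^ #(I ∩ S) :=
        sum_le_sum_of_subset_of_nonneg (subset_univ _) fun _ _ _ => by positivity
    _ = 2 ^ y * 2 ^ Fintype.card α * (3 / 4) ^ #S := by
        rw [← mul_sum, sum_half_pow_card_inter, mul_assoc]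

end SubsetCounting

lemma isCompact_setOf_sum_sq_eq_one (ι : Type*) [Fintype ι] :
    IsCompact {e : ι → ℝ | ∑ i, e i ^ 2 = 1} := by
  refine Metric.isCompact_of_isClosed_isBounded (isClosed_eq (by fun_prop) continuous_const) ?_
  refine (Metric.isBounded_closedBall (x := 0) (r := 1)).subset fun e he => ?_
  rw [Metric.mem_closedBall, dist_zero_right, pi_norm_le_iff_of_nonneg zero_le_one]
  intro i
  rw [Real.norm_eq_abs, ← sq_le_one_iff_abs_le_one, ← Set.mem_ofPred.1 he]
  exact single_le_sum (f := fun i => e i ^ 2) (fun i _ => sq_nonneg _) (mem_univ i)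

lemma exists_finset_net_setOf_sum_sq_eq_one (ι : Type*) [Fintype ι] {ε : ℝ} (hε : 0 < ε) :
    ∃ T : Finset (ι → ℝ), (∀ t ∈ T, ∑ i, t i ^ 2 = 1) ∧
      ∀ e : ι → ℝ, ∑ i, e i ^ 2 = 1 → ∃ t ∈ T, dist e t < ε := by
  obtain ⟨T, hTS, hcover⟩ := (isCompact_setOf_sum_sq_eq_one ι).elim_nhds_subcover
    (fun t => Metric.ball t ε) fun t _ => Metric.ball_mem_nhds t hε
  refine ⟨T, hTS, fun e he => ?_⟩
  simpa using hcover he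

lemma card_filter_card_inter_lt_le_exp {α : Type*} [Fintype α] [DecidableEq α] (S : Finset α)
    {y : ℝ} (hy : 3 * y ≤ #S) :
    (#{I : Finset α | (#(I ∩ S) : ℝ) < y} : ℝ) ≤
      exp (-(log (32 / 27) * y)) * Fintype.card (Finset α) := by
  have hrate : (2 : ℝ) ^ y * (3 / 4) ^ (3 * y) = exp (-(log (32 / 27) * y)) := by
    rw [rpow_mul (by norm_num), ← mul_rpow (by norm_num) (by norm_num), ← neg_mul, ← log_inv,
      ← rpow_def_of_pos (by norm_num)]
    norm_num
  calc (#{I : Finset α | (#(I ∩ S) : ℝ) < y} : ℝ)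
      ≤ 2 ^ y * 2 ^ Fintype.card α * (3 / 4) ^ #S := card_filter_card_inter_lt_le S y
    _ ≤ 2 ^ y * 2 ^ Fintype.card α * (3 / 4) ^ (3 * y) := by
        rw [← rpow_natCast (3 / 4)]
        exact mul_le_mul_of_nonneg_left
          (rpow_le_rpow_of_exponent_ge (by norm_num) (by norm_num) hy) (by positivity)
    _ = exp (-(log (32 / 27) * y)) * Fintype.card (Finset α) := by
        rw [← hrate, Fintype.card_finset]; push_cast; ring

lemma card_filter_not_le_of_forall_exists {β ι : Type*} [Fintype β] (T : Finset ι)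
    (p : β → Prop) [DecidablePred p] (q : ι → β → Prop) [∀ t, DecidablePred (q t)] {b : ℝ}
    (hcover : ∀ x, ¬p x → ∃ t ∈ T, q t x) (hq : ∀ t ∈ T, (#{x | q t x} : ℝ) ≤ b) :
    (#{x | ¬p x} : ℝ) ≤ #T * b := by
  classical
  have hsub : ({x | ¬p x} : Finset β) ⊆ T.biUnion fun t => {x | q t x} := fun x hx => by
    simpa using hcover x (mem_filter.1 hx).2
  calc (#{x | ¬p x} : ℝ) ≤ ∑ t ∈ T, (#{x | q t x} : ℝ) := by
        exact_mod_cast (card_le_card hsub).trans card_biUnion_le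
    _ ≤ #T * b := by
        simpa using sum_le_sum hq

lemma one_sub_le_card_setOf_div_card {β : Type*} [Fintype β] [Nonempty β] (p : β → Prop)
    [DecidablePred p] {B : ℝ} (h : (#{x | ¬p x} : ℝ) ≤ B * Fintype.card β) :
    1 - B ≤ (Nat.card {x | p x} : ℝ) / Fintype.card β := by
  have hsplit := card_filter_add_card_filter_not (s := univ) p
  rw [Nat.card_eq_fintype_card, Fintype.card_subtype, le_div_iff₀ (by positivity)]
  simp only [Set.mem_ofPred_eq]
  have : (#{x | p x} : ℝ) + #{x | ¬p x} = Fintype.card β := by exact_mod_cast hsplit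
  linarith

section LargeColumns

variable {ι κ : Type*} [Fintype ι] [Fintype κ]

noncomputable def largeColumns (M : Matrix ι κ ℝ) (δ : ℝ) (e : ι → ℝ) : Finset κ :=
  {j | δ ≤ |∑ i, M i j * e i|}

lemma nat_card_setOf_le_abs (M : Matrix ι κ ℝ) (δ : ℝ) (e : ι → ℝ) :
    Nat.card {j | δ ≤ |∑ i, M i j * e i|} = #(largeColumns M δ e) := by
  rw [Nat.card_eq_fintype_card, Fintype.card_subtype]
  rfl

lemma nat_card_setOf_mem_and_le_abs [DecidableEq κ] (M : Matrix ι κ ℝ) (δ : ℝ) (e : ι → ℝ)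
    (I : Finset κ) :
    Nat.card {j | j ∈ I ∧ δ ≤ |∑ i, M i j * e i|} = #(I ∩ largeColumns M δ e) := by
  rw [Nat.card_eq_fintype_card, Fintype.card_subtype]
  congr 1
  ext j
  simp [largeColumns]

lemma abs_sum_mul_sub_sum_mul_le {a : ι → ℝ} (ha : ∀ i, |a i| ≤ 1) (e t : ι → ℝ) :
    |∑ i, a i * e i - ∑ i, a i * t i| ≤ Fintype.card ι * dist e t := by
  rw [← sum_sub_distrib]
  calc |∑ i, (a i * e i - a i * t i)| ≤ ∑ i, |a i * e i - a i * t i| := abs_sum_le_sum_abs _ _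
    _ ≤ ∑ _i : ι, dist e t := by
        refine sum_le_sum fun i _ => ?_
        rw [← mul_sub, abs_mul, ← Real.dist_eq]
        exact (mul_le_of_le_one_left dist_nonneg (ha i)).trans (dist_le_pi_dist e t i)
    _ = Fintype.card ι * dist e t := by simp

lemma largeColumns_subset_largeColumns {M : Matrix ι κ ℝ} (hM : ∀ i j, |M i j| ≤ 1)
    {δ δ' : ℝ} {e t : ι → ℝ} (hdist : Fintype.card ι * dist e t ≤ δ - δ') :
    largeColumns M δ t ⊆ largeColumns M δ' e := by
  intro j hj
  simp only [largeColumns, mem_filter, mem_univ, true_and] at hj ⊢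
  have := abs_sum_mul_sub_sum_mul_le (fun i => hM i j) e t
  have := abs_sub_abs_le_abs_sub (∑ i, M i j * t i) (∑ i, M i j * e i)
  rw [abs_sub_comm] at this
  linarith

lemma le_card_inter_largeColumns_of_net [DecidableEq κ] {M : Matrix ι κ ℝ}
    (hM : ∀ i j, |M i j| ≤ 1) {T : Finset (ι → ℝ)} {δ δ' x : ℝ}
    (hnet : ∀ e : ι → ℝ, ∑ i, e i ^ 2 = 1 → ∃ t ∈ T, Fintype.card ι * dist e t ≤ δ - δ')
    {I : Finset κ} (hI : ∀ t ∈ T, x ≤ #(I ∩ largeColumns M δ t))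
    {e : ι → ℝ} (he : ∑ i, e i ^ 2 = 1) :
    x ≤ #(I ∩ largeColumns M δ' e) := by
  obtain ⟨t, ht, hclose⟩ := hnet e he
  calc x ≤ #(I ∩ largeColumns M δ t) := hI t ht
    _ ≤ #(I ∩ largeColumns M δ' e) := by
        gcongr
        exact largeColumns_subset_largeColumns hM hclose

end LargeColumns

theorem statement8_general (r : ℕ) (δ : ℝ) (hδ : 0 < δ) :
    ∃ c K : ℝ, 0 < c ∧ ∀ (n : ℕ) (M : Matrix (Fin r) (Fin n) ℝ),
      NonDeg δ M → (∀ i j, |M i j| ≤ 1) →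
      -- with probability at least `1 - K·exp(-cn)` over a uniformly random subset `I ⊆ [n]`,
      -- the column submatrix `M_I` is `(δ/3)`-non-degenerate (with at least `(δ/3)·n` columns
      -- `w` of `M_I` satisfying `|⟨w,e⟩| ≥ δ/3`, where `n` is the original number of columns)
      1 - K * Real.exp (-c * n) ≤
        (Nat.card {I : Finset (Fin n) |
          ∀ e : Fin r → ℝ, ∑ i, e i ^ 2 = 1 →
            δ / 3 * n ≤
              (Nat.card {j : Fin n | j ∈ I ∧ δ / 3 ≤ |∑ i, M i j * e i|} : ℝ)} : ℝ) / 2 ^ n := by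
  classical
  obtain ⟨T, hT, hnet⟩ :=
    exists_finset_net_setOf_sum_sq_eq_one (Fin r) (ε := 2 * δ / (3 * (r + 1))) (by positivity)
  have hnet' : ∀ e : Fin r → ℝ, ∑ i, e i ^ 2 = 1 →
      ∃ t ∈ T, Fintype.card (Fin r) * dist e t ≤ δ - δ / 3 := by
    intro e he
    obtain ⟨t, ht, hdist⟩ := hnet e he
    rw [lt_div_iff₀ (by positivity)] at hdist
    refine ⟨t, ht, ?_⟩
    rw [Fintype.card_fin]
    nlinarith [dist_nonneg (x := e) (y := t)]
  have hc : 0 < log (32 / 27) * (δ / 3) := mul_pos (log_pos (by norm_num)) (by positivity)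
  refine ⟨_, #T, hc, fun n M hM hM1 => ?_⟩
  have hbad : ∀ t ∈ T, (#{I : Finset (Fin n) | (#(I ∩ largeColumns M δ t) : ℝ) < δ / 3 * n} : ℝ)
      ≤ exp (-(log (32 / 27) * (δ / 3)) * n) * Fintype.card (Finset (Fin n)) := by
    intro t ht
    have hlarge := hM t (hT t ht)
    rw [nat_card_setOf_le_abs] at hlarge
    convert card_filter_card_inter_lt_le_exp (largeColumns M δ t) (y := δ / 3 * n)
      (by linarith) using 3
    ring
  have hcover : ∀ I : Finset (Fin n), ¬(∀ e : Fin r → ℝ, ∑ i, e i ^ 2 = 1 →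
      δ / 3 * n ≤ (Nat.card {j : Fin n | j ∈ I ∧ δ / 3 ≤ |∑ i, M i j * e i|} : ℝ)) →
      ∃ t ∈ T, (#(I ∩ largeColumns M δ t) : ℝ) < δ / 3 * n := by
    intro I hI
    contrapose! hI
    intro e he
    rw [nat_card_setOf_mem_and_le_abs]
    exact le_card_inter_largeColumns_of_net hM1 hnet' hI he
  have := one_sub_le_card_setOf_div_card _
    ((card_filter_not_le_of_forall_exists T _ _ hcover hbad).trans_eq (mul_assoc _ _ _).symm)
  simpa using this

theorem statement8 (r : ℕ) (hr : 1 ≤ r) (δ : ℝ) (hδ : 0 < δ) :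
    ∃ c K : ℝ, 0 < c ∧ ∀ (n : ℕ) (M : Matrix (Fin r) (Fin n) ℝ),
      NonDeg δ M → (∀ i j, |M i j| ≤ 1) →
      -- with probability at least `1 - K·exp(-cn)` over a uniformly random subset `I ⊆ [n]`,
      -- the column submatrix `M_I` is `(δ/3)`-non-degenerate (with at least `(δ/3)·n` columns
      -- `w` of `M_I` satisfying `|⟨w,e⟩| ≥ δ/3`, where `n` is the original number of columns)
      1 - K * Real.exp (-c * n) ≤
        (Nat.card {I : Finset (Fin n) |
          ∀ e : Fin r → ℝ, ∑ i, e i ^ 2 = 1 →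
            δ / 3 * n ≤
              (Nat.card {j : Fin n | j ∈ I ∧ δ / 3 ≤ |∑ i, M i j * e i|} : ℝ)} : ℝ) / 2 ^ n :=
  statement8_general r δ hδ
end

section
/- For every integer r ≥ 1 and any ε > 0, there exists c = c(r,ε) > 0 such that the following holds. Let A be a complex r×r matrix with |det A| ≥ ε and with all entries of absolute value at most 1. Let θ ∈ [−π, π] be a uniformly random phase. Then with probability at least c, the real matrix Re(e^{iθ}A) (obtained by taking the real part of each entry of e^{iθ}A) satisfies |det Re(e^{iθ}A)| ≥ c. -/
/-!
Write `n` for the size of `A`. The polynomial `p z = det (z • A + conj A)` has `n`-th coefficient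
`det A`, and on the circle `p (e^{2iθ}) = (2 e^{iθ})^n det Re(e^{iθ} A)`. Extracting that
coefficient by integrating against `e^{-2inθ}` gives
`∫_{-π}^{π} |det Re(e^{iθ} A)| dθ ≥ 2π |det A| / 2^n`. The integrand is at most `n!` because the
entries of `Re(e^{iθ} A)` lie in `[-1, 1]`, so it cannot have this large an integral unless it is
at least `c` on a set of measure proportional to `c` (a reverse Markov inequality).
-/

open Polynomial Complex MeasureTheory

theorem setIntegral_abs_le_mul_measureReal_add {α : Type*} [MeasurableSpace α] {μ : Measure α}
    {s : Set α} (hs : MeasurableSet s) (hμs : μ s ≠ ⊤) {f : α → ℝ} (hf : Measurable f)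
    {M c : ℝ} (hc : 0 ≤ c) (hfM : ∀ x ∈ s, |f x| ≤ M) :
    ∫ x in s, |f x| ∂μ ≤ M * μ.real (s ∩ {x | c ≤ |f x|}) + c * μ.real s := by
  have hE : MeasurableSet {x | c ≤ |f x|} := measurableSet_le measurable_const hf.abs
  have : Fact (μ s < ⊤) := ⟨hμs.lt_top⟩
  calc ∫ x in s, |f x| ∂μ ≤ ∫ x in s, ({x | c ≤ |f x|}.indicator (fun _ ↦ M) x + c) ∂μ := by
        refine integral_mono_of_nonneg (.of_forall fun x ↦ abs_nonneg _) ?_ ?_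
        · exact ((integrable_const M).indicator hE).add (integrable_const c)
        · refine (ae_restrict_iff' hs).2 (.of_forall fun x hx ↦ ?_)
          by_cases hcx : c ≤ |f x|
          · simpa [Set.indicator_of_mem (show x ∈ {x | c ≤ |f x|} from hcx)] using
              (hfM x hx).trans (le_add_of_nonneg_right hc)
          · simp [Set.indicator_of_notMem (show x ∉ {x | c ≤ |f x|} from hcx), (not_le.1 hcx).le]
    _ = M * μ.real (s ∩ {x | c ≤ |f x|}) + c * μ.real s := by
        rw [integral_add ((integrable_const M).indicator hE) (integrable_const c),
          integral_indicator_const M hE, setIntegral_const, measureReal_restrict_apply hE,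
          Set.inter_comm, smul_eq_mul, smul_eq_mul, mul_comm, mul_comm (μ.real s)]

theorem intervalIntegral_exp_int_mul_I (m : ℤ) :
    ∫ θ in -Real.pi..Real.pi, exp (m * θ * I) = if m = 0 then 2 * (Real.pi : ℂ) else 0 := by
  split_ifs with hm
  · simp only [hm, Int.cast_zero, zero_mul, exp_zero, intervalIntegral.integral_const,
      sub_neg_eq_add, real_smul, ofReal_add, mul_one]
    ring
  have hmI : (m : ℂ) * I ≠ 0 := mul_ne_zero (Int.cast_ne_zero.2 hm) I_ne_zero
  have hperiod : exp (m * I * Real.pi) = exp (m * I * (-Real.pi : ℝ)) := by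
    rw [← mul_one (exp (m * I * (-Real.pi : ℝ))), ← exp_int_mul_two_pi_mul_I m, ← exp_add]
    push_cast; ring_nf
  simp_rw [mul_assoc, mul_comm _ I, ← mul_assoc]
  rw [integral_exp_mul_complex hmI, hperiod, sub_self, zero_div]

theorem Polynomial.intervalIntegral_eval_exp_two_mul_I_mul (p : ℂ[X]) (k : ℕ) :
    ∫ θ in -Real.pi..Real.pi, p.eval (exp (2 * θ * I)) * exp (-(2 * k) * θ * I) =
      2 * Real.pi * p.coeff k := by
  have hterm (θ : ℝ) : p.eval (exp (2 * θ * I)) * exp (-(2 * k) * θ * I) =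
      ∑ j ∈ Finset.range (p.natDegree + 1),
        p.coeff j * exp (((2 * j - 2 * k : ℤ) : ℂ) * θ * I) := by
    rw [eval_eq_sum_range, Finset.sum_mul]
    refine Finset.sum_congr rfl fun j _ ↦ ?_
    rw [mul_assoc, ← exp_nat_mul, ← exp_add]; push_cast; ring_nf
  have hcont (j : ℕ) :
      Continuous fun θ : ℝ ↦ p.coeff j * exp (((2 * j - 2 * k : ℤ) : ℂ) * θ * I) := by
    fun_prop
  have hfreq (j : ℕ) : (2 * j - 2 * k : ℤ) = 0 ↔ k = j := by omega
  simp_rw [hterm]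
  rw [intervalIntegral.integral_finsetSum fun j _ ↦ (hcont j).intervalIntegrable _ _]
  simp_rw [intervalIntegral.integral_const_mul, intervalIntegral_exp_int_mul_I, hfreq,
    mul_ite, mul_zero, Finset.sum_ite_eq, Finset.mem_range]
  split_ifs with hk
  · ring
  · rw [coeff_eq_zero_of_natDegree_lt (by omega), mul_zero]

namespace Matrix

variable {n : Type*} [Fintype n] [DecidableEq n]

noncomputable def phaseReDet (A : Matrix n n ℂ) (θ : ℝ) : ℝ :=
  (of fun i j ↦ (exp ((θ : ℂ) * I) * A i j).re).det

theorem continuous_phaseReDet (A : Matrix n n ℂ) : Continuous (phaseReDet A) :=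
  continuous_id.matrix_det.comp (continuous_matrix fun i j ↦ by fun_prop)

theorem abs_phaseReDet_le {A : Matrix n n ℂ} (hA : ∀ i j, ‖A i j‖ ≤ 1) (θ : ℝ) :
    |phaseReDet A θ| ≤ (Fintype.card n).factorial := by
  have hentry (i j : n) : |(exp ((θ : ℂ) * I) * A i j).re| ≤ 1 := by
    refine (abs_re_le_norm _).trans ?_
    rw [norm_mul, norm_exp_ofReal_mul_I, one_mul]
    exact hA i j
  rw [phaseReDet]
  simpa only [one_pow, nsmul_eq_mul, mul_one, AbsoluteValue.abs_apply] using
    det_le (A := of fun i j ↦ (exp ((θ : ℂ) * I) * A i j).re) (abv := AbsoluteValue.abs) hentry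

theorem eval_det_X_smul_add_conj (A : Matrix n n ℂ) (θ : ℝ) :
    (det ((X : ℂ[X]) • A.map C + (A.map (starRingEnd ℂ)).map C)).eval (exp (2 * θ * I)) =
      (2 * exp (θ * I)) ^ Fintype.card n * phaseReDet A θ := by
  have hentry (a : ℂ) : exp (2 * θ * I) * a + starRingEnd ℂ a =
      2 * exp (θ * I) * (exp (θ * I) * a).re := by
    have hsq : exp (θ * I) * exp (θ * I) = exp (2 * θ * I) := by rw [← exp_add]; ring_nf
    have hconj : starRingEnd ℂ (exp (θ * I)) * exp (θ * I) = 1 := by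
      rw [conj_mul', norm_exp_ofReal_mul_I]; norm_num
    rw [re_eq_add_conj, map_mul]
    linear_combination (-a) * hsq - starRingEnd ℂ a * hconj
  have hcast : (phaseReDet A θ : ℂ) = (of fun i j ↦ ((exp (θ * I) * A i j).re : ℂ)).det :=
    ofRealHom.map_det _
  rw [hcast, ← det_smul, ← coe_evalRingHom, RingHom.map_det]
  congr 1
  ext i j
  simp only [RingHom.mapMatrix_apply, map_apply, add_apply, smul_apply, coe_evalRingHom,
    eval_add, eval_mul, eval_X, eval_C, of_apply, smul_eq_mul]
  exact hentry _

theorem two_pow_mul_intervalIntegral_phaseReDet_mul_exp (A : Matrix n n ℂ) :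
    2 ^ Fintype.card n *
        ∫ θ in -Real.pi..Real.pi, (phaseReDet A θ : ℂ) * exp (-(Fintype.card n) * θ * I) =
      2 * Real.pi * A.det := by
  have hshift (θ : ℝ) : 2 ^ Fintype.card n * ((phaseReDet A θ : ℂ) *
        exp (-(Fintype.card n) * θ * I)) =
      (det ((X : ℂ[X]) • A.map C + (A.map (starRingEnd ℂ)).map C)).eval (exp (2 * θ * I)) *
        exp (-(2 * Fintype.card n) * θ * I) := by
    rw [eval_det_X_smul_add_conj, mul_pow, ← exp_nat_mul]
    have : exp (Fintype.card n * (θ * I)) * exp (-(2 * Fintype.card n) * θ * I) =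
        exp (-(Fintype.card n) * θ * I) := by
      rw [← exp_add]; ring_nf
    rw [← this]; ring
  rw [← intervalIntegral.integral_const_mul, intervalIntegral.integral_congr fun θ _ ↦ hshift θ,
    intervalIntegral_eval_exp_two_mul_I_mul, coeff_det_X_add_C_card]

theorem two_pi_mul_norm_det_le (A : Matrix n n ℂ) :
    2 * Real.pi * ‖A.det‖ ≤
      2 ^ Fintype.card n * ∫ θ in Set.Icc (-Real.pi) Real.pi, |phaseReDet A θ| := by
  have hnorm (θ : ℝ) :
      ‖(phaseReDet A θ : ℂ) * exp (-(Fintype.card n) * θ * I)‖ = |phaseReDet A θ| := by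
    rw [norm_mul, norm_real, Real.norm_eq_abs, show -(Fintype.card n : ℂ) * θ * I =
      ((-(Fintype.card n * θ) : ℝ) : ℂ) * I by push_cast; ring, norm_exp_ofReal_mul_I, mul_one]
  calc 2 * Real.pi * ‖A.det‖ = ‖2 ^ Fintype.card n *
        ∫ θ in -Real.pi..Real.pi, (phaseReDet A θ : ℂ) * exp (-(Fintype.card n) * θ * I)‖ := by
        rw [two_pow_mul_intervalIntegral_phaseReDet_mul_exp, norm_mul, norm_mul, norm_real,
          RCLike.norm_two, Real.norm_of_nonneg Real.pi_pos.le]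
    _ ≤ 2 ^ Fintype.card n * ∫ θ in -Real.pi..Real.pi, |phaseReDet A θ| := by
        rw [norm_mul, norm_pow, RCLike.norm_two,
          ← intervalIntegral.integral_congr fun θ _ ↦ hnorm θ]
        gcongr
        exact intervalIntegral.norm_integral_le_integral_norm (by linarith [Real.pi_pos])
    _ = 2 ^ Fintype.card n * ∫ θ in Set.Icc (-Real.pi) Real.pi, |phaseReDet A θ| := by
        rw [intervalIntegral.integral_of_le (by linarith [Real.pi_pos]),
          integral_Icc_eq_integral_Ioc]

end Matrix

theorem statement9_general (r : ℕ) (ε : ℝ) (hε : 0 < ε) :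
    ∃ c : ℝ, 0 < c ∧ ∀ A : Matrix (Fin r) (Fin r) ℂ,
      ε ≤ ‖A.det‖ → (∀ i j, ‖A i j‖ ≤ 1) →
      -- with probability at least `c` over a uniformly random phase `θ ∈ [-π, π]`,
      -- we have `|det Re(e^{iθ}A)| ≥ c`
      c ≤ (MeasureTheory.volume {θ : ℝ | θ ∈ Set.Icc (-Real.pi) Real.pi ∧
            c ≤ |(Matrix.of fun i j => (Complex.exp ((θ : ℂ) * Complex.I) * A i j).re).det|}).toReal
          / (2 * Real.pi) := by
  -- chosen so that `2π ε / 2^r - 2π c = 2π c · r!`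
  set c := ε / (2 ^ r * (r.factorial + 1)) with hc_def
  have hc : 0 < c := by positivity
  refine ⟨c, hc, fun A hdet hA ↦ ?_⟩
  have hupper := setIntegral_abs_le_mul_measureReal_add (μ := volume)
    (s := Set.Icc (-Real.pi) Real.pi) measurableSet_Icc measure_Icc_lt_top.ne
    A.continuous_phaseReDet.measurable hc.le fun θ _ ↦ A.abs_phaseReDet_le hA θ
  have hlower := A.two_pi_mul_norm_det_le
  rw [Real.volume_real_Icc_of_le (by linarith [Real.pi_pos]), sub_neg_eq_add, ← two_mul] at hupper
  rw [Fintype.card_fin] at hupper hlower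
  set t := volume.real (Set.Icc (-Real.pi) Real.pi ∩ {θ | c ≤ |A.phaseReDet θ|})
  have hε_eq : ε = 2 ^ r * (r.factorial + 1) * c := by rw [hc_def]; field_simp
  have hmass : 2 ^ r * r.factorial * (2 * Real.pi * c) ≤ 2 ^ r * r.factorial * t :=
    calc 2 ^ r * r.factorial * (2 * Real.pi * c)
        = 2 * Real.pi * ε - 2 ^ r * (c * (2 * Real.pi)) := by rw [hε_eq]; ring
      _ ≤ (2 ^ r * ∫ θ in Set.Icc (-Real.pi) Real.pi, |A.phaseReDet θ|)
          - 2 ^ r * (c * (2 * Real.pi)) :=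
          sub_le_sub_right ((mul_le_mul_of_nonneg_left hdet Real.two_pi_pos.le).trans hlower) _
      _ ≤ 2 ^ r * (r.factorial * t + c * (2 * Real.pi)) - 2 ^ r * (c * (2 * Real.pi)) :=
          sub_le_sub_right (mul_le_mul_of_nonneg_left hupper (pow_nonneg zero_le_two r)) _
      _ = 2 ^ r * r.factorial * t := by ring
  show c ≤ t / (2 * Real.pi)
  rw [le_div_iff₀ Real.two_pi_pos, mul_comm]
  exact le_of_mul_le_mul_left hmass (by positivity)

theorem statement9 (r : ℕ) (hr : 1 ≤ r) (ε : ℝ) (hε : 0 < ε) :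
    ∃ c : ℝ, 0 < c ∧ ∀ A : Matrix (Fin r) (Fin r) ℂ,
      ε ≤ ‖A.det‖ → (∀ i j, ‖A i j‖ ≤ 1) →
      -- with probability at least `c` over a uniformly random phase `θ ∈ [-π, π]`,
      -- we have `|det Re(e^{iθ}A)| ≥ c`
      c ≤ (MeasureTheory.volume {θ : ℝ | θ ∈ Set.Icc (-Real.pi) Real.pi ∧
            c ≤ |(Matrix.of fun i j => (Complex.exp ((θ : ℂ) * Complex.I) * A i j).re).det|}).toReal
          / (2 * Real.pi) :=
  statement9_general r ε hε
end

section
/- Let q ≥ 1 be an integer and let B be a nonsingular complex q×q matrix all of whose entries have absolute value at most 1. Then for any vector e ∈ ℂ^q with Euclidean norm ‖e‖₂ = 1, the vector Be satisfies ‖Be‖₁ ≥ (q!)^{−1}·|det B|. -/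
/-!
Cramer's rule gives `det B • e = adj B *ᵥ (B *ᵥ e)`. Each entry of `adj B` is a
`(q-1) × (q-1)` minor with entries of modulus at most `1`, hence has modulus at most
`(q-1)!`, so `|det B| · ‖e‖_∞ ≤ (q-1)! · ‖B e‖₁`. Finally `‖e‖₂ = 1` forces
`‖e‖_∞ ≥ 1/√q ≥ 1/q`.
-/

open Finset Nat

namespace Matrix

variable {𝕜 : Type*} [NormedField 𝕜]

theorem norm_adjugate_apply_le {n : ℕ} (A : Matrix (Fin (n + 1)) (Fin (n + 1)) 𝕜) {c : ℝ}
    (hA : ∀ i j, ‖A i j‖ ≤ c) (i j : Fin (n + 1)) :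
    ‖A.adjugate i j‖ ≤ n ! * c ^ n := by
  rw [adjugate_fin_succ_eq_det_submatrix, norm_mul, norm_pow, norm_neg, norm_one, one_pow,
    one_mul]
  refine (det_le (abv := NormedField.toAbsoluteValue 𝕜)
    fun a b => hA (j.succAbove a) (i.succAbove b)).trans_eq ?_
  simp

theorem norm_det_mul_norm_le {n : Type*} [Fintype n] [DecidableEq n] (A : Matrix n n 𝕜)
    {C : ℝ} (hC : ∀ i j, ‖A.adjugate i j‖ ≤ C) (v : n → 𝕜) :
    ‖A.det‖ * ‖v‖ ≤ C * ∑ i, ‖(A *ᵥ v) i‖ := by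
  obtain _ | ⟨⟨i₀⟩⟩ := isEmpty_or_nonempty n
  · simp [Subsingleton.elim v 0]
  have hC0 : 0 ≤ C := (norm_nonneg _).trans (hC i₀ i₀)
  have cramer : A.det • v = A.adjugate *ᵥ (A *ᵥ v) := by
    rw [mulVec_mulVec, adjugate_mul, smul_mulVec, one_mulVec]
  rw [← norm_smul, pi_norm_le_iff_of_nonneg (by positivity)]
  intro j
  calc ‖(A.det • v) j‖ = ‖∑ i, A.adjugate j i * (A *ᵥ v) i‖ := by rw [cramer]; rfl
    _ ≤ ∑ i, ‖A.adjugate j i‖ * ‖(A *ᵥ v) i‖ := by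
        simpa only [norm_mul] using norm_sum_le univ fun i => A.adjugate j i * (A *ᵥ v) i
    _ ≤ ∑ i, C * ‖(A *ᵥ v) i‖ := by gcongr; exact hC j _
    _ = C * ∑ i, ‖(A *ᵥ v) i‖ := (mul_sum _ _ _).symm

end Matrix

theorem one_le_card_mul_norm_of_sum_norm_sq_eq_one {ι E : Type*} [Fintype ι]
    [SeminormedAddCommGroup E] {v : ι → E} (hv : ∑ i, ‖v i‖ ^ 2 = 1) :
    1 ≤ Fintype.card ι * ‖v‖ := by
  have hsum_le : ∑ i, ‖v i‖ ^ 2 ≤ Fintype.card ι * ‖v‖ ^ 2 := by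
    simpa using sum_le_sum fun i (_ : i ∈ univ) =>
      pow_le_pow_left₀ (norm_nonneg _) (norm_le_pi_norm v i) 2
  have hnorm_le : ‖v‖ ≤ 1 := by
    refine (pi_norm_le_iff_of_nonneg zero_le_one).2 fun i => ?_
    have : ‖v i‖ ^ 2 ≤ 1 := hv ▸ single_le_sum (fun j _ => sq_nonneg ‖v j‖) (mem_univ i)
    nlinarith [norm_nonneg (v i)]
  calc 1 ≤ Fintype.card ι * ‖v‖ ^ 2 := hv ▸ hsum_le
    _ ≤ Fintype.card ι * ‖v‖ := by
        gcongr; nlinarith [norm_nonneg v]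

theorem statement10_general (q : ℕ) (B : Matrix (Fin q) (Fin q) ℂ)
    (hB1 : ∀ i j, ‖B i j‖ ≤ 1)
    (e : Fin q → ℂ) (he : ∑ i, ‖e i‖ ^ 2 = 1) :
    ((q.factorial : ℝ))⁻¹ * ‖B.det‖ ≤ ∑ i, ‖B.mulVec e i‖ := by
  obtain _ | n := q
  · simp at he
  have hadj (i j) : ‖B.adjugate i j‖ ≤ n ! := by
    simpa using B.norm_adjugate_apply_le hB1 i j
  have he_sup : 1 ≤ (n + 1 : ℕ) * ‖e‖ := by
    simpa using one_le_card_mul_norm_of_sum_norm_sq_eq_one he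
  rw [inv_mul_le_iff₀ (by positivity), factorial_succ, cast_mul, mul_assoc]
  calc ‖B.det‖ ≤ (n + 1 : ℕ) * ‖e‖ * ‖B.det‖ := le_mul_of_one_le_left (norm_nonneg _) he_sup
    _ = (n + 1 : ℕ) * (‖B.det‖ * ‖e‖) := by ring
    _ ≤ (n + 1 : ℕ) * (n ! * ∑ i, ‖B.mulVec e i‖) :=
        mul_le_mul_of_nonneg_left (B.norm_det_mul_norm_le hadj e) (by positivity)

theorem statement10 (q : ℕ) (hq : 1 ≤ q) (B : Matrix (Fin q) (Fin q) ℂ)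
    (hB : B.det ≠ 0) (hB1 : ∀ i j, ‖B i j‖ ≤ 1)
    (e : Fin q → ℂ) (he : ∑ i, ‖e i‖ ^ 2 = 1) :
    ((q.factorial : ℝ))⁻¹ * ‖B.det‖ ≤ ∑ i, ‖B.mulVec e i‖ :=
  statement10_general q B hB1 e he
end

section
/- For any integer r ≥ 1 and any 0 < ε ≤ 1, there is a constant c = c(r,ε) > 0 such that the following holds. Suppose v₁,…,v_r ∈ ℝⁿ are ε-independent vectors with ‖v_i‖∞ ≤ 1 for each i. Then the r×n matrix with rows v₁,…,v_r is c-non-degenerate. -/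
/-!
If a unit vector `e` has `|⟨w, e⟩| ≥ c` for fewer than `cn` columns `w`, then `t = Mᵀe` has
`‖t‖₁ ≤ r · cn + cn`, since every entry of `t` is at most `r`. Subtracting the rank-one matrix
`e tᵀ` from `M` kills the row combination `∑ eᵢ vᵢ`, so the new rows are dependent, at `ℓ¹` cost
`‖e‖₁ ‖t‖₁ ≤ r(r + 1)cn`, which is at most `εn` for `c = ε / (r + 1)²`.
-/

/-- Vectors `v₁,…,v_q ∈ 𝔽ⁿ` are `ε`-independent if there do not exist linearly dependent
vectors `v₁',…,v_q'` with `‖v₁−v₁'‖₁ + … + ‖v_q−v_q'‖₁ ≤ εn`. -/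
def EpsIndependent (𝔽 : Type*) [NormedField 𝔽] {q n : ℕ} (ε : ℝ)
    (v : Fin q → Fin n → 𝔽) : Prop :=
  ¬ ∃ v' : Fin q → Fin n → 𝔽, ¬ LinearIndependent 𝔽 v' ∧
      ∑ i, ∑ j, ‖v i j - v' i j‖ ≤ ε * n

open Finset

theorem not_linearIndependent_sub_smul_sum_smul {ι R M : Type*} [Fintype ι] [CommRing R]
    [Nontrivial R] [AddCommGroup M] [Module R M] (v : ι → M) {e : ι → R}
    (he : ∑ i, e i ^ 2 = 1) :
    ¬ LinearIndependent R (fun i => v i - e i • ∑ k, e k • v k) := by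
  rw [Fintype.linearIndependent_iff]
  push Not
  refine ⟨e, ?_, ?_⟩
  · simp only [smul_sub, sum_sub_distrib, smul_smul, ← sum_smul, ← sq, he, one_smul, sub_self]
  · by_contra! h
    simp [h] at he

theorem Finset.sum_le_mul_card_filter_add_mul_card {α : Type*} (s : Finset α) {f : α → ℝ}
    {B c : ℝ} (hc : 0 ≤ c) (hB : ∀ j ∈ s, f j ≤ B) :
    ∑ j ∈ s, f j ≤ B * #{j ∈ s | c ≤ f j} + c * #s := by
  rw [← sum_filter_add_sum_filter_not s (c ≤ f ·)]
  gcongr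
  · simpa [mul_comm] using sum_le_card_nsmul _ f B fun j hj => hB j (mem_filter.mp hj).1
  · calc ∑ j ∈ s with ¬c ≤ f j, f j ≤ #{j ∈ s | ¬c ≤ f j} • c :=
          sum_le_card_nsmul _ f c fun j hj => (not_le.mp (mem_filter.mp hj).2).le
      _ ≤ c * #s := by
          rw [nsmul_eq_mul, mul_comm]
          gcongr
          exact filter_subset _ _

theorem abs_le_one_of_sum_sq_eq_one {ι : Type*} [Fintype ι] {e : ι → ℝ}
    (he : ∑ i, e i ^ 2 = 1) (i : ι) : |e i| ≤ 1 :=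
  (sq_le_one_iff_abs_le_one _).mp (he ▸ single_le_sum (fun k _ => sq_nonneg (e k)) (mem_univ i))

theorem abs_sum_mul_le_card {ι : Type*} [Fintype ι] {a b : ι → ℝ} (ha : ∀ i, |a i| ≤ 1)
    (hb : ∀ i, |b i| ≤ 1) : |∑ i, a i * b i| ≤ Fintype.card ι :=
  calc |∑ i, a i * b i| ≤ ∑ i, |a i * b i| := abs_sum_le_sum_abs _ _
    _ ≤ ∑ _i : ι, (1 : ℝ) := sum_le_sum fun i _ => by
        rw [abs_mul]; exact mul_le_one₀ (ha i) (abs_nonneg _) (hb i)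
    _ = Fintype.card ι := by simp

theorem exists_not_linearIndependent_sum_norm_sub_le {r n : ℕ} {v : Fin r → Fin n → ℝ}
    (hv : ∀ i j, |v i j| ≤ 1) {e : Fin r → ℝ} (he : ∑ i, e i ^ 2 = 1) {c : ℝ} (hc : 0 ≤ c) :
    ∃ v' : Fin r → Fin n → ℝ, ¬ LinearIndependent ℝ v' ∧
      ∑ i, ∑ j, ‖v i j - v' i j‖ ≤ r * (r * #{j | c ≤ |∑ i, v i j * e i|} + c * n) := by
  set t : Fin n → ℝ := fun j => ∑ i, v i j * e i
  have he_le : ∀ i, |e i| ≤ 1 := abs_le_one_of_sum_sq_eq_one he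
  have ht : t = ∑ k, e k • v k := by
    ext j
    simp [t, mul_comm]
  refine ⟨fun i => v i - e i • t, ht ▸ not_linearIndependent_sub_smul_sum_smul v he, ?_⟩
  have ht_le : ∑ j, |t j| ≤ r * #{j | c ≤ |t j|} + c * n := by
    have := sum_le_mul_card_filter_add_mul_card univ hc
      fun j _ => by simpa using abs_sum_mul_le_card (hv · j) he_le
    rwa [card_fin] at this
  calc ∑ i, ∑ j, ‖v i j - (v i - e i • t) j‖ = (∑ i, |e i|) * ∑ j, |t j| := by
        simp [sum_mul_sum]
    _ ≤ r * (r * #{j | c ≤ |t j|} + c * n) := by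
        refine mul_le_mul ?_ ht_le (sum_nonneg fun j _ => abs_nonneg _) r.cast_nonneg
        simpa using sum_le_sum fun i (_ : i ∈ univ) => he_le i

theorem statement11_general (r : ℕ) (ε : ℝ) (hε : 0 < ε) :
    ∃ c : ℝ, 0 < c ∧ ∀ (n : ℕ) (v : Fin r → Fin n → ℝ),
      EpsIndependent ℝ ε v → (∀ i j, |v i j| ≤ 1) →
      NonDeg c (Matrix.of v) := by
  set c := ε / (r + 1) ^ 2 with hc
  have hc_pos : 0 < c := by positivity
  refine ⟨c, hc_pos, fun n v hind hv e he => ?_⟩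
  by_contra! hfew
  simp only [Nat.card_eq_fintype_card, Fintype.card_subtype, Set.mem_ofPred_eq,
    Matrix.of_apply] at hfew
  obtain ⟨v', hdep, hdist⟩ := exists_not_linearIndependent_sum_norm_sub_le hv he hc_pos.le
  refine hind ⟨v', hdep, hdist.trans ?_⟩
  calc (r : ℝ) * (r * #{j | c ≤ |∑ i, v i j * e i|} + c * n)
      ≤ r * (r * (c * n) + c * n) := by gcongr
    _ = r * (r + 1) * c * n := by ring
    _ ≤ (r + 1) ^ 2 * c * n := by gcongr; nlinarith
    _ = ε * n := by rw [hc]; field_simp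

theorem statement11 (r : ℕ) (hr : 1 ≤ r) (ε : ℝ) (hε : 0 < ε) (hε1 : ε ≤ 1) :
    ∃ c : ℝ, 0 < c ∧ ∀ (n : ℕ) (v : Fin r → Fin n → ℝ),
      EpsIndependent ℝ ε v → (∀ i j, |v i j| ≤ 1) →
      NonDeg c (Matrix.of v) :=
  statement11_general r ε hε
end

section
/- Let 𝔽 be one of ℂ, ℝ, ℚ and fix an integer r ≥ 1. There is a constant K depending only on r such that the following holds. Let 0 < α ≤ 1 and let A ∈ 𝔽^{n×n} be a symmetric matrix with ‖A‖∞ ≤ 1. Suppose there is a matrix A' ∈ 𝔽^{n×n} of rank less than r with ‖A − A'‖₁ ≤ αn². Then there exists a symmetric matrix H ∈ 𝔽^{n×n} of rank less than r such that ‖A − H‖₁ ≤ K·α^{1/(2·(6r)^r)}·n². -/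
/-!
Call an index `m` good when `crossError A A' m`, the `ℓ¹`-mass of `A - A'` on row `m` and
column `m`, is at most `√α n`; by Markov, at most `2√α n` indices are bad. The good columns of
`A'` span a space of dimension `d < r`, and `d` of them with maximal determinant express, by
Cramer's rule, every good column of `A'` as a combination of the selected ones with
coefficients `C j k` of norm at most `1`. With `C` vanishing on bad rows,
`B = C A'[τ, τ] Cᵀ` has rank at most `d`. On a good pair `(i, j)`, `A i j - B i j` is
`(A - A') j i` plus a combination, with coefficients of norm at most `1`, of errors on the
selected rows and columns (this uses `A = Aᵀ`), so these pairs cost `αn² + d √α n²`; pairs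
with a bad index cost at most `4√α n²`. Symmetrising `B` does not increase the error, and
`√α ≤ α ^ ε` because the exponent `ε` is at most `1/2`.
-/

def Statement14 (𝔽 : Type) [NormedField 𝔽] : Prop :=
  ∀ r : ℕ, 1 ≤ r → ∃ K : ℝ,
    ∀ α : ℝ, 0 < α → α ≤ 1 →
    ∀ (n : ℕ) (A : Matrix (Fin n) (Fin n) 𝔽), A.IsSymm → (∀ i j, ‖A i j‖ ≤ 1) →
      (∃ A' : Matrix (Fin n) (Fin n) 𝔽, A'.rank < r ∧
        ∑ i, ∑ j, ‖A i j - A' i j‖ ≤ α * (n : ℝ) ^ 2) →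
      ∃ H : Matrix (Fin n) (Fin n) 𝔽, H.IsSymm ∧ H.rank < r ∧
        ∑ i, ∑ j, ‖A i j - H i j‖ ≤ K * α ^ ((2 * (6 * (r : ℝ)) ^ r)⁻¹) * (n : ℝ) ^ 2

open Finset Module Submodule
open scoped Matrix

section

variable {𝕜 V ι κ : Type*} [NormedField 𝕜]

section BoundedCoefficients

variable [AddCommGroup V] [Module 𝕜 V]

theorem exists_basis_comp_norm_repr_le_one [FiniteDimensional 𝕜 V] [Finite ι] (u : ι → V)
    (hu : span 𝕜 (Set.range u) = ⊤) :
    ∃ (τ : Fin (finrank 𝕜 V) → ι) (b : Basis (Fin (finrank 𝕜 V)) 𝕜 V),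
      ⇑b = u ∘ τ ∧ ∀ j l, ‖b.repr (u j) l‖ ≤ 1 := by
  classical
  let e := finBasis 𝕜 V
  let b₀ := (Basis.ofSpan hu.ge).reindex ((Basis.ofSpan hu.ge).indexEquiv e)
  have hb₀ : ∀ l, ∃ j, u j = b₀ l :=
    fun l => Basis.ofSpan_subset hu.ge ⟨_, (Basis.reindex_apply _ _ _).symm⟩
  choose τ₀ hτ₀ using hb₀
  have : Nonempty (Fin (finrank 𝕜 V) → ι) := ⟨τ₀⟩
  obtain ⟨τ, hτ⟩ := Finite.exists_max fun τ : Fin (finrank 𝕜 V) → ι => ‖e.det (u ∘ τ)‖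
  have hunit : IsUnit (e.det (u ∘ τ)) := by
    have h₀ : e.det (u ∘ τ₀) ≠ 0 := by
      rw [show u ∘ τ₀ = b₀ from funext hτ₀]
      exact (e.isUnit_det b₀).ne_zero
    exact isUnit_iff_ne_zero.2 (norm_pos_iff.1 ((norm_pos_iff.2 h₀).trans_le (hτ τ₀)))
  obtain ⟨hli, hsp⟩ := e.is_basis_iff_det.2 hunit
  refine ⟨τ, Basis.mk hli hsp.ge, Basis.coe_mk _ _, fun j l => ?_⟩
  -- Cramer's rule: the coordinate is a ratio of two determinants whose denominator is maximal.
  have hcramer := congr($(e.det_smul_mk_coord_eq_det_update hli hsp.ge l) (u j))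
  simp only [LinearMap.smul_apply, Basis.coord_apply, smul_eq_mul,
    MultilinearMap.toLinearMap_apply, AlternatingMap.coe_multilinearMap,
    ← Function.comp_update] at hcramer
  have hmax := hτ (Function.update τ l j)
  rw [← hcramer, norm_mul] at hmax
  exact (mul_le_iff_le_one_right (norm_pos_iff.2 hunit.ne_zero)).1 hmax

theorem exists_sum_smul_norm_coeff_le_one [Finite ι] (u : ι → V) :
    ∃ (d : ℕ) (τ : Fin d → ι) (c : ι → Fin d → 𝕜), d = finrank 𝕜 (span 𝕜 (Set.range u)) ∧
      (∀ j l, ‖c j l‖ ≤ 1) ∧ ∀ j, u j = ∑ l, c j l • u (τ l) := by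
  have := FiniteDimensional.span_of_finite 𝕜 (Set.finite_range u)
  let w : ι → span 𝕜 (Set.range u) := fun j => ⟨u j, subset_span (Set.mem_range_self j)⟩
  have hw : span 𝕜 (Set.range w) = ⊤ := by
    rw [← span_span_coe_preimage (R := 𝕜) (s := Set.range u)]
    congr 1
    ext ⟨x, hx⟩
    simp [w]
  obtain ⟨τ, b, hb, hc⟩ := exists_basis_comp_norm_repr_le_one w hw
  refine ⟨_, τ, fun j => b.repr (w j), rfl, hc, fun j => ?_⟩
  simpa [hb, w] using congr(Subtype.val $(b.sum_repr (w j))).symm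

end BoundedCoefficients

theorem exists_cols_eq_sum_norm_coeff_le_one [Fintype ι] (A' : Matrix κ ι 𝕜) (G : Finset ι) :
    ∃ (d : ℕ) (τ : Fin d → ι) (C : Matrix ι (Fin d) 𝕜), d ≤ A'.rank ∧ (∀ k, τ k ∈ G) ∧
      (∀ j k, ‖C j k‖ ≤ 1) ∧ (∀ j ∉ G, C j = 0) ∧
      ∀ j ∈ G, ∀ i, A' i j = ∑ k, C j k * A' i (τ k) := by
  classical
  let u : G → κ → 𝕜 := fun j => A'.col j
  obtain ⟨d, τ, c, hd, hc, hu⟩ := exists_sum_smul_norm_coeff_le_one (𝕜 := 𝕜) u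
  refine ⟨d, fun k => τ k, fun j k => if h : j ∈ G then c ⟨j, h⟩ k else 0, ?_,
    fun k => (τ k).2, fun j k => ?_, fun j h => by ext k; simp [h], fun j hj i => ?_⟩
  · have := FiniteDimensional.span_of_finite 𝕜 (Set.finite_range A'.col)
    rw [hd, Matrix.rank_eq_finrank_span_cols]
    exact finrank_mono (span_mono (by rintro _ ⟨j, rfl⟩; exact ⟨j, rfl⟩))
  · by_cases h : j ∈ G <;> simp [h, hc]
  · simpa [hj, u] using congr_fun (hu ⟨j, hj⟩) i

theorem card_compl_filter_le_mul_le_sum [Fintype ι] [DecidableEq ι] {f : ι → ℝ}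
    (hf : ∀ m, 0 ≤ f m) (T : ℝ) : #(univ.filter fun m => f m ≤ T)ᶜ * T ≤ ∑ m, f m := by
  have hlarge : ∀ m ∈ (univ.filter fun m => f m ≤ T)ᶜ, T ≤ f m := fun m hm => by
    simp only [mem_compl, mem_filter, mem_univ, true_and, not_le] at hm
    exact hm.le
  calc #(univ.filter fun m => f m ≤ T)ᶜ * T ≤ ∑ m ∈ (univ.filter fun m => f m ≤ T)ᶜ, f m := by
        simpa using card_nsmul_le_sum _ _ _ hlarge
    _ ≤ ∑ m, f m := sum_le_univ_sum_of_nonneg hf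

def crossError [Fintype ι] (A A' : Matrix ι ι 𝕜) (m : ι) : ℝ :=
  ∑ j, (‖A j m - A' j m‖ + ‖A m j - A' m j‖)

theorem sum_crossError [Fintype ι] (A A' : Matrix ι ι 𝕜) :
    ∑ m, crossError A A' m = 2 * ∑ i, ∑ j, ‖A i j - A' i j‖ := by
  simp only [crossError, sum_add_distrib]
  rw [sum_comm]
  ring

section Compression

variable {d : ℕ} {A A' : Matrix ι ι 𝕜} {G : Finset ι} {τ : Fin d → ι}
  {C : Matrix ι (Fin d) 𝕜}

theorem mul_submatrix_mul_transpose_apply_of_mem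
    (hrep : ∀ j ∈ G, ∀ i, A' i j = ∑ k, C j k * A' i (τ k)) (i : ι) {j : ι} (hj : j ∈ G) :
    (C * A'.submatrix τ τ * Cᵀ) i j = ∑ k, C i k * A' (τ k) j := by
  simp only [Matrix.mul_apply, Matrix.submatrix_apply, Matrix.transpose_apply, sum_mul,
    hrep j hj, mul_sum]
  rw [sum_comm]
  exact sum_congr rfl fun k _ => sum_congr rfl fun l _ => by ring

theorem mul_submatrix_mul_transpose_apply_eq_zero (hCG : ∀ i ∉ G, C i = 0) {i j : ι}
    (hij : i ∉ G ∨ j ∉ G) : (C * A'.submatrix τ τ * Cᵀ) i j = 0 := by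
  rcases hij with hi | hj
  · simp [Matrix.mul_apply, hCG i hi]
  · simp [Matrix.mul_apply, hCG j hj]

theorem norm_sub_mul_submatrix_mul_transpose_le_of_mem (hA : A.IsSymm)
    (hC : ∀ i k, ‖C i k‖ ≤ 1) (hrep : ∀ j ∈ G, ∀ i, A' i j = ∑ k, C j k * A' i (τ k))
    {i j : ι} (hi : i ∈ G) (hj : j ∈ G) :
    ‖A i j - (C * A'.submatrix τ τ * Cᵀ) i j‖ ≤
      ‖A j i - A' j i‖ + ∑ k, (‖A j (τ k) - A' j (τ k)‖ + ‖A (τ k) j - A' (τ k) j‖) := by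
  have hdecomp : A i j - (C * A'.submatrix τ τ * Cᵀ) i j = (A j i - A' j i) +
      ∑ k, C i k * ((A (τ k) j - A' (τ k) j) - (A j (τ k) - A' j (τ k))) := by
    rw [mul_submatrix_mul_transpose_apply_of_mem hrep i hj, hrep i hi j, hA.apply j i]
    simp only [mul_sub, sum_sub_distrib, hA.apply (τ _) j]
    ring
  rw [hdecomp]
  refine (norm_add_le _ _).trans (add_le_add le_rfl ((norm_sum_le _ _).trans ?_))
  refine sum_le_sum fun k _ => ?_
  rw [norm_mul]
  exact mul_le_of_le_one_left (norm_nonneg _) (hC i k) |>.trans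
    ((norm_sub_le _ _).trans_eq (add_comm _ _))

theorem norm_sub_mul_submatrix_mul_transpose_le [DecidableEq ι] (hA : A.IsSymm)
    (hA1 : ∀ i j, ‖A i j‖ ≤ 1) (hC : ∀ i k, ‖C i k‖ ≤ 1) (hCG : ∀ i ∉ G, C i = 0)
    (hrep : ∀ j ∈ G, ∀ i, A' i j = ∑ k, C j k * A' i (τ k)) (i j : ι) :
    ‖A i j - (C * A'.submatrix τ τ * Cᵀ) i j‖ ≤
      ‖A j i - A' j i‖ + ∑ k, (‖A j (τ k) - A' j (τ k)‖ + ‖A (τ k) j - A' (τ k) j‖) +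
        ((if i ∈ G then 0 else 1) + (if j ∈ G then 0 else 1)) := by
  by_cases hij : i ∈ G ∧ j ∈ G
  · simpa [hij] using norm_sub_mul_submatrix_mul_transpose_le_of_mem hA hC hrep hij.1 hij.2
  · have hone : (1 : ℝ) ≤ (if i ∈ G then 0 else 1) + (if j ∈ G then 0 else 1) := by
      split_ifs with hi hj <;> norm_num
      exact hij ⟨hi, hj⟩
    rw [mul_submatrix_mul_transpose_apply_eq_zero hCG (not_and_or.1 hij), sub_zero]
    have : 0 ≤ ‖A j i - A' j i‖ + ∑ k, (‖A j (τ k) - A' j (τ k)‖ + ‖A (τ k) j - A' (τ k) j‖) := by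
      positivity
    linarith [hA1 i j]

theorem sum_norm_sub_mul_submatrix_mul_transpose_le [Fintype ι] [DecidableEq ι] (hA : A.IsSymm)
    (hA1 : ∀ i j, ‖A i j‖ ≤ 1) (hC : ∀ i k, ‖C i k‖ ≤ 1) (hCG : ∀ i ∉ G, C i = 0)
    (hrep : ∀ j ∈ G, ∀ i, A' i j = ∑ k, C j k * A' i (τ k)) :
    ∑ i, ∑ j, ‖A i j - (C * A'.submatrix τ τ * Cᵀ) i j‖ ≤
      ∑ i, ∑ j, ‖A i j - A' i j‖ + Fintype.card ι * ∑ k, crossError A A' (τ k) +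
        2 * Fintype.card ι * #Gᶜ := by
  refine (sum_le_sum fun i _ => sum_le_sum fun j _ =>
    norm_sub_mul_submatrix_mul_transpose_le hA hA1 hC hCG hrep i j).trans_eq ?_
  have hrow : ∑ i : ι, ∑ j, ‖A j i - A' j i‖ = ∑ i, ∑ j, ‖A i j - A' i j‖ := sum_comm
  have hcross : ∑ _i : ι, ∑ j, ∑ k, (‖A j (τ k) - A' j (τ k)‖ + ‖A (τ k) j - A' (τ k) j‖) =
      Fintype.card ι * ∑ k, crossError A A' (τ k) := by
    rw [sum_const, card_univ, nsmul_eq_mul, sum_comm]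
    rfl
  have hbad : ∑ i : ι, ∑ j : ι, ((if i ∈ G then (0 : ℝ) else 1) + (if j ∈ G then 0 else 1)) =
      2 * Fintype.card ι * #Gᶜ := by
    have hcompl : ∑ i, (if i ∈ G then (0 : ℝ) else 1) = #Gᶜ := by
      simp [sum_ite, filter_not, compl_eq_univ_sdiff]
    simp only [sum_add_distrib, sum_const, card_univ, nsmul_eq_mul, ← mul_sum, hcompl]
    ring
  rw [← hrow, ← hcross, ← hbad]
  simp only [sum_add_distrib]

end Compression

theorem rank_smul_add_transpose_le [Fintype ι] {d : ℕ} (c : 𝕜) (C : Matrix ι (Fin d) 𝕜)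
    (S : Matrix (Fin d) (Fin d) 𝕜) :
    (c • (C * S * Cᵀ + (C * S * Cᵀ)ᵀ)).rank ≤ d := by
  have hfac : c • (C * S * Cᵀ + (C * S * Cᵀ)ᵀ) =
      C * (c • (S * Cᵀ + Sᵀ * Cᵀ)) := by
    simp only [Matrix.transpose_mul, Matrix.transpose_transpose, Matrix.mul_assoc,
      Matrix.mul_add, Matrix.mul_smul]
  rw [hfac]
  exact (Matrix.rank_mul_le_left _ _).trans ((Matrix.rank_le_card_width C).trans_eq
    (Fintype.card_fin d))

theorem sum_norm_sub_smul_add_transpose_le [Fintype ι] (h2 : ‖(2 : 𝕜)‖ = 2)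
    {A : Matrix ι ι 𝕜} (hA : A.IsSymm) (B : Matrix ι ι 𝕜) :
    ∑ i, ∑ j, ‖A i j - ((2 : 𝕜)⁻¹ • (B + Bᵀ)) i j‖ ≤ ∑ i, ∑ j, ‖A i j - B i j‖ := by
  have h2ne : (2 : 𝕜) ≠ 0 := fun h => by rw [h, norm_zero] at h2; norm_num at h2
  have hpt : ∀ i j, ‖A i j - ((2 : 𝕜)⁻¹ • (B + Bᵀ)) i j‖ ≤
      2⁻¹ * (‖A i j - B i j‖ + ‖A j i - B j i‖) := fun i j => by
    have : A i j - ((2 : 𝕜)⁻¹ • (B + Bᵀ)) i j =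
        (2 : 𝕜)⁻¹ * ((A i j - B i j) + (A j i - B j i)) := by
      simp only [Matrix.smul_apply, Matrix.add_apply, Matrix.transpose_apply, smul_eq_mul,
        hA.apply i j]
      field_simp
      ring
    rw [this, norm_mul, norm_inv, h2]
    gcongr
    exact norm_add_le _ _
  have hswap : ∑ i, ∑ j, ‖A j i - B j i‖ = ∑ i, ∑ j, ‖A i j - B i j‖ := sum_comm
  calc ∑ i, ∑ j, ‖A i j - ((2 : 𝕜)⁻¹ • (B + Bᵀ)) i j‖
      ≤ ∑ i, ∑ j, 2⁻¹ * (‖A i j - B i j‖ + ‖A j i - B j i‖) :=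
        sum_le_sum fun i _ => sum_le_sum fun j _ => hpt i j
    _ = ∑ i, ∑ j, ‖A i j - B i j‖ := by
        simp only [← mul_sum, sum_add_distrib, hswap]
        ring

theorem exists_isSymm_rank_le_sum_norm_sub_le [Fintype ι] (h2 : ‖(2 : 𝕜)‖ = 2)
    {A : Matrix ι ι 𝕜} (hA : A.IsSymm) (hA1 : ∀ i j, ‖A i j‖ ≤ 1) (A' : Matrix ι ι 𝕜) {α : ℝ}
    (hα : 0 < α) (hα1 : α ≤ 1) (hAA' : ∑ i, ∑ j, ‖A i j - A' i j‖ ≤ α * Fintype.card ι ^ 2) :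
    ∃ H : Matrix ι ι 𝕜, H.IsSymm ∧ H.rank ≤ A'.rank ∧
      ∑ i, ∑ j, ‖A i j - H i j‖ ≤ (A'.rank + 5) * √α * Fintype.card ι ^ 2 := by
  classical
  set n : ℝ := (Fintype.card ι : ℝ)
  set T := √α * n
  set G := univ.filter fun m => crossError A A' m ≤ T
  have hmarkov : #Gᶜ * T ≤ 2 * (α * n ^ 2) := by
    refine (card_compl_filter_le_mul_le_sum (fun m => ?_) T).trans ?_
    · unfold crossError; positivity
    · rw [sum_crossError]; linarith
  obtain ⟨d, τ, C, hd, hτG, hC, hCG, hrep⟩ := exists_cols_eq_sum_norm_coeff_le_one A' G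
  have hτ : ∀ k, crossError A A' (τ k) ≤ T := fun k => (mem_filter.1 (hτG k)).2
  set B := C * A'.submatrix τ τ * Cᵀ
  refine ⟨(2 : 𝕜)⁻¹ • (B + Bᵀ), (Matrix.isSymm_add_transpose_self B).smul _,
    (rank_smul_add_transpose_le _ C _).trans hd,
    (sum_norm_sub_smul_add_transpose_le h2 hA B).trans
      ((sum_norm_sub_mul_submatrix_mul_transpose_le hA hA1 hC hCG hrep).trans ?_)⟩
  have hs : 0 < √α := Real.sqrt_pos.2 hα
  have hαs : α * n ^ 2 ≤ √α * n ^ 2 := by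
    gcongr
    exact (Real.le_sqrt hα.le hα.le).2 (by nlinarith)
  have hcross : n * ∑ k, crossError A A' (τ k) ≤ A'.rank * √α * n ^ 2 := by
    calc n * ∑ k, crossError A A' (τ k) ≤ n * (d * T) := by
          gcongr
          simpa using sum_le_sum fun k (_ : k ∈ univ) => hτ k
      _ ≤ A'.rank * √α * n ^ 2 := by
          rw [show n * (d * T) = d * √α * n ^ 2 by ring]
          gcongr
  have hbad : 2 * n * #Gᶜ ≤ 4 * √α * n ^ 2 := by
    rw [← Real.sq_sqrt hα.le] at hmarkov
    refine le_of_mul_le_mul_right ?_ hs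
    nlinarith
  linarith

end

theorem Real.sqrt_le_rpow {α ε : ℝ} (hα : 0 < α) (hα1 : α ≤ 1) (hε : ε ≤ 1 / 2) :
    √α ≤ α ^ ε := by
  rw [Real.sqrt_eq_rpow]
  exact Real.rpow_le_rpow_of_exponent_ge hα hα1 hε

theorem statement14_of_norm_two {𝔽 : Type} [NormedField 𝔽] (h2 : ‖(2 : 𝔽)‖ = 2) :
    Statement14 𝔽 := by
  intro r hr
  refine ⟨r + 5, fun α hα hα1 n A hA hA1 ⟨A', hrank, hAA'⟩ => ?_⟩
  obtain ⟨H, hH, hHrank, hAH⟩ :=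
    exists_isSymm_rank_le_sum_norm_sub_le h2 hA hA1 A' hα hα1 (by simpa using hAA')
  have hε : (2 * (6 * (r : ℝ)) ^ r)⁻¹ ≤ 1 / 2 := by
    have h6r : (1 : ℝ) ≤ (6 * r) ^ r := one_le_pow₀ (by norm_cast; omega)
    rw [one_div]
    gcongr
    linarith
  refine ⟨H, hH, hHrank.trans_lt hrank, ?_⟩
  simp only [Fintype.card_fin] at hAH
  refine hAH.trans ?_
  gcongr
  exact Real.sqrt_le_rpow hα hα1 (by exact_mod_cast hε)

theorem statement14 : Statement14 ℂ ∧ Statement14 ℝ ∧ Statement14 ℚ :=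
  ⟨statement14_of_norm_two (by norm_num), statement14_of_norm_two (by norm_num),
    statement14_of_norm_two (by rw [← Rat.norm_cast_real]; norm_num)⟩
end

section
/- Let 𝔽 be one of ℂ, ℝ, ℚ. Let 0 ≤ ε ≤ 1 and 0 ≤ δ ≤ 1, let q ≥ 0 be an integer, and let M be a q×n matrix over 𝔽 whose rows are (ε + q(q−1)δ)-independent and all of whose entries have absolute value at most 1. Let G be a graph on the vertex set [n] in which every vertex has degree at most δn. Then there exists a q-element independent set I ⊆ [n] of G such that the q×q matrix M_I satisfies |det M_I| ≥ ε^q. -/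
def Statement16 (𝔽 : Type) [NormedField 𝔽] : Prop :=
  ∀ ε δ : ℝ, 0 ≤ ε → ε ≤ 1 → 0 ≤ δ → δ ≤ 1 →
  ∀ (q n : ℕ) (M : Matrix (Fin q) (Fin n) 𝔽),
    -- the rows of `M` are `(ε + q(q−1)δ)`-independent
    EpsIndependent 𝔽 (ε + (q : ℝ) * ((q : ℝ) - 1) * δ) (fun a => M a) →
    (∀ i j, ‖M i j‖ ≤ 1) →
    ∀ G : SimpleGraph (Fin n),
      -- every vertex of `G` has degree at most `δn`
      (∀ v : Fin n, (Nat.card {u : Fin n | G.Adj v u} : ℝ) ≤ δ * n) →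
      ∃ (I : Finset (Fin n)) (hI : I.card = q),
        -- `I` is an independent set of `G`
        (∀ i ∈ I, ∀ j ∈ I, ¬ G.Adj i j) ∧
        -- and `|det M_I| ≥ ε^q`
        ε ^ q ≤ ‖(Matrix.of fun a b => M a (↑(I.orderIsoOfFin hI b))).det‖

open Finset

namespace EpsIndependent

variable {𝔽 : Type*} [NormedField 𝔽] {q n : ℕ} {ε η : ℝ}

theorem mono {v : Fin q → Fin n → 𝔽} (h : EpsIndependent 𝔽 η v) (hεη : ε ≤ η) :
    EpsIndependent 𝔽 ε v := fun ⟨v', hv', hcost⟩ =>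
  h ⟨v', hv', hcost.trans (mul_le_mul_of_nonneg_right hεη n.cast_nonneg)⟩

theorem init {v : Fin (q + 1) → Fin n → 𝔽} (h : EpsIndependent 𝔽 ε v) :
    EpsIndependent 𝔽 ε (Fin.init v) := by
  rintro ⟨v', hv', hcost⟩
  refine h ⟨Fin.snoc v' (v (Fin.last q)), fun hli => hv' ?_, ?_⟩
  · simpa [Fin.snoc_castSucc] using hli.comp _ (Fin.castSucc_injective q)
  · simpa [Fin.sum_univ_castSucc, Fin.init] using hcost

end EpsIndependent

theorem Matrix.exists_det_submatrix_snoc_eq_sum {R ι : Type*} [CommRing R] {k : ℕ}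
    (M : Matrix (Fin (k + 1)) ι R) (f : Fin k → ι) :
    ∃ c : Fin (k + 1) → R, c (Fin.last k) = (M.submatrix Fin.castSucc f).det ∧
      ∀ j, (M.submatrix id (Fin.snoc f j)).det = ∑ i, c i * M i j := by
  refine ⟨fun i => (-1) ^ (i + k : ℕ) * (M.submatrix i.succAbove f).det, ?_, fun j => ?_⟩
  · simp [Fin.succAbove_last, ← two_mul]
  · rw [det_succ_column _ (Fin.last k)]
    refine Finset.sum_congr rfl fun i _ => ?_
    simp only [Fin.val_last, submatrix_apply, id_eq, Fin.snoc_last, Fin.succAbove_last,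
      submatrix_submatrix, CompTriple.comp_eq, Fin.snoc_comp_castSucc]
    ring

theorem Matrix.injective_of_det_submatrix_ne_zero {R m ι : Type*} [CommRing R] [Fintype m]
    [DecidableEq m] (M : Matrix m ι R) {f : m → ι} (h : (M.submatrix id f).det ≠ 0) :
    Function.Injective f := fun a b hab => by
  by_contra hne
  exact h (det_zero_of_column_eq hne fun i => by simp [hab])

theorem Matrix.norm_det_submatrix_id_perm {𝔽 m : Type*} [NormedField 𝔽] [Fintype m]
    [DecidableEq m] (A : Matrix m m 𝔽) (σ : Equiv.Perm m) :
    ‖(A.submatrix id σ).det‖ = ‖A.det‖ := by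
  rcases Int.units_eq_one_or (Equiv.Perm.sign σ) with h | h <;> simp [det_permute', h]

theorem Matrix.norm_det_submatrix_orderIsoOfFin {𝔽 κ : Type*} [NormedField 𝔽] [LinearOrder κ]
    {q : ℕ} (M : Matrix (Fin q) κ 𝔽) {f : Fin q → κ} (hf : Function.Injective f)
    (hI : #(univ.image f) = q) :
    ‖(M.submatrix id fun b => ((univ.image f).orderIsoOfFin hI b : κ)).det‖ =
      ‖(M.submatrix id f).det‖ := by
  set e := (univ.image f).orderIsoOfFin hI
  let g : Fin q → Fin q := fun b => e.symm ⟨f b, mem_image_of_mem f (mem_univ b)⟩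
  have hg : Function.Injective g := fun a b hab =>
    hf (congrArg Subtype.val (e.symm.injective hab))
  have hfg : M.submatrix id f = (M.submatrix id fun b => (e b : κ)).submatrix id
      (Equiv.ofBijective g hg.bijective_of_finite) := by
    ext a b
    simp [g]
  rw [hfg, norm_det_submatrix_id_perm]

theorem SimpleGraph.not_adj_snoc {V : Type*} (G : SimpleGraph V) {k : ℕ} {f : Fin k → V} {j : V}
    (hf : ∀ a b, ¬ G.Adj (f a) (f b)) (hj : ∀ a, ¬ G.Adj (f a) j) (a b : Fin (k + 1)) :
    ¬ G.Adj (Fin.snoc (α := fun _ => V) f j a) (Fin.snoc (α := fun _ => V) f j b) := by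
  revert a b
  simp only [Fin.forall_fin_succ', Fin.snoc_castSucc, Fin.snoc_last]
  exact ⟨fun a => ⟨hf a, hj a⟩, fun b h => hj b h.symm, G.loopless.irrefl j⟩

theorem exists_not_linearIndependent_near {𝔽 ι κ : Type*} [NormedField 𝔽] [Fintype ι]
    [DecidableEq ι] [Fintype κ] (M : ι → κ → 𝔽) (hM : ∀ i j, ‖M i j‖ ≤ 1) (c : ι → 𝔽) {r : ι}
    (hr : c r ≠ 0) (B : Finset κ) {ε : ℝ} (hε : 0 ≤ ε)
    (hB : ∀ j ∉ B, ‖∑ i, c i * M i j‖ ≤ ε * ‖c r‖) :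
    ∃ v : ι → κ → 𝔽, ¬ LinearIndependent 𝔽 v ∧
      ∑ i, ∑ j, ‖M i j - v i j‖ ≤ Fintype.card ι * #B + ε * Fintype.card κ := by
  classical
  let v : ι → κ → 𝔽 := fun i j =>
    if j ∈ B then 0 else M i j - if i = r then (∑ i, c i * M i j) / c r else 0
  refine ⟨v, Fintype.not_linearIndependent_iff.2 ⟨c, funext fun j => ?_, r, hr⟩, ?_⟩
  · by_cases hj : j ∈ B
    · simp [v, hj]
    · simp [v, hj, mul_sub, mul_div_cancel₀ _ hr]
  have hcol : ∀ j, ∑ i, ‖M i j - v i j‖ ≤ (if j ∈ B then (Fintype.card ι : ℝ) else 0) + ε := by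
    intro j
    by_cases hj : j ∈ B
    · calc ∑ i, ‖M i j - v i j‖ = ∑ i, ‖M i j‖ := by simp [v, hj]
        _ ≤ ∑ _i : ι, 1 := sum_le_sum fun i _ => hM i j
        _ ≤ _ := by simpa [hj] using hε
    · simpa [v, hj, apply_ite norm, norm_div, div_le_iff₀ (norm_pos_iff.2 hr)] using hB j hj
  rw [sum_comm]
  refine (sum_le_sum fun j _ => hcol j).trans_eq ?_
  simp [sum_add_distrib, mul_comm]

theorem EpsIndependent.exists_norm_det_submatrix_snoc_gt {𝔽 : Type*} [NormedField 𝔽] {k n : ℕ}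
    {ε η : ℝ} (hε : 0 ≤ ε) {M : Matrix (Fin (k + 1)) (Fin n) 𝔽} (hind : EpsIndependent 𝔽 η M)
    (hM : ∀ i j, ‖M i j‖ ≤ 1) {f : Fin k → Fin n} (hf : (M.submatrix Fin.castSucc f).det ≠ 0)
    (B : Finset (Fin n)) (hη : (k + 1) * #B + ε * n ≤ η * n) :
    ∃ j ∉ B, ε * ‖(M.submatrix Fin.castSucc f).det‖ < ‖(M.submatrix id (Fin.snoc f j)).det‖ := by
  obtain ⟨c, hc_last, hc⟩ := M.exists_det_submatrix_snoc_eq_sum f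
  by_contra! h
  obtain ⟨v, hv, hcost⟩ := exists_not_linearIndependent_near M hM c (hc_last ▸ hf) B hε
    fun j hj => by simpa only [hc, hc_last] using h j hj
  exact hind ⟨v, hv, hcost.trans (by simpa using hη)⟩

theorem exists_nonadj_columns_pow_le_norm_det {𝔽 : Type*} [NormedField 𝔽] {n : ℕ} {ε δ : ℝ}
    (hε : 0 ≤ ε) (hδ : 0 ≤ δ) (G : SimpleGraph (Fin n)) [DecidableRel G.Adj]
    (hdeg : ∀ v, (G.degree v : ℝ) ≤ δ * n) :
    ∀ {k : ℕ} (M : Matrix (Fin k) (Fin n) 𝔽), (∀ i j, ‖M i j‖ ≤ 1) →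
      EpsIndependent 𝔽 (ε + k * (k - 1) * δ) M →
      ∃ f : Fin k → Fin n, (∀ a b, ¬ G.Adj (f a) (f b)) ∧
        (M.submatrix id f).det ≠ 0 ∧ ε ^ k ≤ ‖(M.submatrix id f).det‖
  | 0, M, _, _ => ⟨Fin.elim0, fun a => a.elim0, by simp, by simp⟩
  | k + 1, M, hM, hind => by
    obtain ⟨f, hfG, hf0, hfε⟩ := exists_nonadj_columns_pow_le_norm_det hε hδ G hdeg (Fin.init M)
      (fun i j => hM _ _) ((hind.mono (by push_cast; nlinarith)).init)
    let B := univ.biUnion fun a => G.neighborFinset (f a)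
    have hB : (#B : ℝ) ≤ k * (δ * n) := by
      calc (#B : ℝ) ≤ ∑ a, (G.degree (f a) : ℝ) := by exact_mod_cast card_biUnion_le
        _ ≤ ∑ _a : Fin k, δ * n := sum_le_sum fun a _ => hdeg (f a)
        _ = k * (δ * n) := by simp
    obtain ⟨j, hjB, hj⟩ :=
      hind.exists_norm_det_submatrix_snoc_gt hε hM hf0 B (by push_cast; nlinarith)
    refine ⟨Fin.snoc f j, G.not_adj_snoc hfG fun a h => hjB ?_, ?_, ?_⟩
    · exact mem_biUnion.2 ⟨a, mem_univ a, by simpa using h⟩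
    · exact norm_pos_iff.1 ((mul_nonneg hε (norm_nonneg _)).trans_lt hj)
    · calc ε ^ (k + 1) = ε * ε ^ k := pow_succ' ε k
        _ ≤ ε * ‖(M.submatrix Fin.castSucc f).det‖ := by gcongr; exact hfε
        _ ≤ _ := hj.le

theorem statement16_of_normedField (𝔽 : Type) [NormedField 𝔽] : Statement16 𝔽 := by
  classical
  intro ε δ hε _ hδ _ q n M hind hM G hdeg
  have hdeg' : ∀ v, (G.degree v : ℝ) ≤ δ * n := fun v => by
    rw [← G.card_neighborSet_eq_degree, ← Nat.card_eq_fintype_card]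
    exact hdeg v
  obtain ⟨f, hfG, hf0, hfε⟩ := exists_nonadj_columns_pow_le_norm_det hε hδ G hdeg' M hM hind
  have hf := M.injective_of_det_submatrix_ne_zero hf0
  have hI : #(univ.image f) = q := by rw [card_image_of_injective _ hf, card_fin]
  refine ⟨univ.image f, hI, ?_, hfε.trans_eq (M.norm_det_submatrix_orderIsoOfFin hf hI).symm⟩
  simp only [mem_image, mem_univ, true_and]
  rintro _ ⟨a, rfl⟩ _ ⟨b, rfl⟩
  exact hfG a b

theorem statement16 : Statement16 ℂ ∧ Statement16 ℝ ∧ Statement16 ℚ :=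
  ⟨statement16_of_normedField ℂ, statement16_of_normedField ℝ, statement16_of_normedField ℚ⟩
end

section
/- Let 𝔽 be one of ℂ, ℝ, ℚ. Let 0 ≤ ε ≤ 1 and let v₁,…,v_q ∈ 𝔽ⁿ be ε-dependent vectors with ‖v_i‖∞ ≤ 1 for each i. Then there exist linearly dependent vectors v₁',…,v_q' ∈ 𝔽ⁿ with ‖v₁−v₁'‖₁ + … + ‖v_q−v_q'‖₁ ≤ εn and such that all entries of v₁',…,v_q' have absolute value at most q+1. -/
def Statement17 (𝔽 : Type) [NormedField 𝔽] : Prop :=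
  ∀ ε : ℝ, 0 ≤ ε → ε ≤ 1 → ∀ (q n : ℕ) (v : Fin q → Fin n → 𝔽),
    -- `v₁,…,v_q` are `ε`-dependent
    ¬ EpsIndependent 𝔽 ε v →
    (∀ i j, ‖v i j‖ ≤ 1) →
    ∃ v' : Fin q → Fin n → 𝔽, ¬ LinearIndependent 𝔽 v' ∧
      (∑ i, ∑ j, ‖v i j - v' i j‖) ≤ ε * n ∧
      ∀ i j, ‖v' i j‖ ≤ (q : ℝ) + 1

/-!
Let `v'` be a dependent family close to `v`, with relation `∑ cᵢ v'ᵢ = 0`. Scale the relation so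
that its largest coefficient `c_m` equals `1`; then `|cᵢ| ≤ 1`. Leave every `vᵢ` with `i ≠ m`
untouched and replace `v_m` by `v_m - ∑ cᵢ vᵢ`, which makes `c` a relation of the new family.
The whole cost is `‖∑ cᵢ vᵢ‖₁ = ‖∑ cᵢ (vᵢ - v'ᵢ)‖₁ ≤ ∑ ‖vᵢ - v'ᵢ‖₁`, and the new entries are at most
`1 + q` in absolute value.
-/

open Finset

section

variable {𝔽 : Type*} [NormedField 𝔽] {ι : Type*} [Fintype ι]

theorem exists_relation_norm_le_one_of_not_linearIndependent {M : Type*} [AddCommGroup M]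
    [Module 𝔽 M] {v : ι → M} (h : ¬ LinearIndependent 𝔽 v) :
    ∃ (c : ι → 𝔽) (m : ι), c m = 1 ∧ (∀ i, ‖c i‖ ≤ 1) ∧ ∑ i, c i • v i = 0 := by
  obtain ⟨g, hg, k, hgk⟩ := Fintype.not_linearIndependent_iff.mp h
  have : Nonempty ι := ⟨k⟩
  obtain ⟨m, hm⟩ := Finite.exists_max fun i => ‖g i‖
  have hgm : g m ≠ 0 := norm_pos_iff.mp ((norm_pos_iff.mpr hgk).trans_le (hm k))
  refine ⟨fun i => (g m)⁻¹ * g i, m, inv_mul_cancel₀ hgm, fun i => ?_, ?_⟩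
  · rw [norm_mul, norm_inv, inv_mul_le_one₀ (norm_pos_iff.mpr hgm)]
    exact hm i
  · simp_rw [mul_smul, ← smul_sum, hg, smul_zero]

theorem sum_smul_update_sub_sum_smul {M : Type*} [AddCommGroup M] [Module 𝔽 M]
    [DecidableEq ι] {c : ι → 𝔽} {m : ι} (hm : c m = 1) (v : ι → M) :
    ∑ i, c i • Function.update v m (v m - ∑ i, c i • v i) i = 0 := by
  have hdiff : ∑ i, (c i • Function.update v m (v m - ∑ i, c i • v i) i - c i • v i)
      = -∑ i, c i • v i := by
    rw [sum_eq_single m (fun i _ hi => by rw [Function.update_of_ne hi, sub_self])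
      (fun h => absurd (mem_univ m) h), Function.update_self, hm, one_smul, one_smul]
    abel
  rw [sum_sub_distrib] at hdiff
  simpa using hdiff

variable {κ : Type*} [Fintype κ]

theorem sum_sum_norm_sub_update [DecidableEq ι] (v : ι → κ → 𝔽) (m : ι) (x : κ → 𝔽) :
    ∑ i, ∑ j, ‖v i j - Function.update v m x i j‖ = ∑ j, ‖v m j - x j‖ :=
  sum_eq_single m (fun i _ hi => by simp [Function.update_of_ne hi])
    (fun h => absurd (mem_univ m) h) |>.trans (by rw [Function.update_self])

theorem sum_norm_sum_smul_le_of_relation {c : ι → 𝔽} (hc : ∀ i, ‖c i‖ ≤ 1)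
    {v v' : ι → κ → 𝔽} (hv' : ∑ i, c i • v' i = 0) :
    ∑ j, ‖(∑ i, c i • v i) j‖ ≤ ∑ i, ∑ j, ‖v i j - v' i j‖ := by
  rw [sum_comm]
  refine sum_le_sum fun j _ => ?_
  have hrel : ∑ i, c i * v' i j = 0 := by simpa using congrFun hv' j
  calc ‖(∑ i, c i • v i) j‖ = ‖∑ i, c i * (v i j - v' i j)‖ := by
        simp [mul_sub, sum_sub_distrib, hrel]
    _ ≤ ∑ i, ‖v i j - v' i j‖ := norm_sum_le_of_le _ fun i _ => by
        rw [norm_mul]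
        exact mul_le_of_le_one_left (norm_nonneg _) (hc i)

theorem norm_sub_sum_mul_le {c : ι → 𝔽} (hc : ∀ i, ‖c i‖ ≤ 1) {x : 𝔽} (hx : ‖x‖ ≤ 1)
    {y : ι → 𝔽} (hy : ∀ i, ‖y i‖ ≤ 1) :
    ‖x - ∑ i, c i * y i‖ ≤ Fintype.card ι + 1 := by
  have hsum : ‖∑ i, c i * y i‖ ≤ Fintype.card ι := by
    simpa using norm_sum_le_of_le univ fun i _ => (norm_mul_le _ _).trans
      (mul_le_one₀ (hc i) (norm_nonneg _) (hy i))
  linarith [norm_sub_le x (∑ i, c i * y i)]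

end

theorem statement17_of_normedField (𝔽 : Type) [NormedField 𝔽] : Statement17 𝔽 := by
  classical
  intro ε _ _ q n v hdep hv
  obtain ⟨v', hv'dep, hcost⟩ := not_not.mp hdep
  obtain ⟨c, m, hcm, hc, hrel⟩ := exists_relation_norm_le_one_of_not_linearIndependent hv'dep
  refine ⟨Function.update v m (v m - ∑ i, c i • v i), ?_, ?_, fun i j => ?_⟩
  · exact Fintype.not_linearIndependent_iff.mpr
      ⟨c, sum_smul_update_sub_sum_smul hcm v, m, hcm ▸ one_ne_zero⟩
  · rw [sum_sum_norm_sub_update]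
    simpa using (sum_norm_sum_smul_le_of_relation hc hrel).trans hcost
  · rcases eq_or_ne i m with rfl | hi
    · simpa using norm_sub_sum_mul_le hc (hv i j) fun k => hv k j
    · rw [Function.update_of_ne hi]
      linarith [hv i j, (q.cast_nonneg : (0 : ℝ) ≤ q)]

theorem statement17 : Statement17 ℂ ∧ Statement17 ℝ ∧ Statement17 ℚ :=
  ⟨statement17_of_normedField ℂ, statement17_of_normedField ℝ, statement17_of_normedField ℚ⟩
end

section
/- Let 𝔽 be a field (in the paper, one of ℂ, ℝ, ℚ). Let v₁,…,v_q ∈ 𝔽ⁿ, let M be the q×n matrix with rows v₁,…,v_q, and let I ⊆ [n] be a subset of size q such that the q×q matrix M_I is invertible. Let H = (h_{ij})_{i,j} ∈ 𝔽^{n×n} be a matrix each of whose rows lies in the linear span of v₁,…,v_q, and suppose h_{ij} = h_{ji} for all i ∈ I and all j ∈ [n]. Then H is symmetric. -/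
/-!
Since `M_I` is invertible, a vector in the row space of `M` is determined by its entries in `I`,
so `H = H_{·,I} P` with `P = M_I⁻¹ M`. The symmetry hypothesis turns `H_{·,I}` into
`(H_{I,·})ᵀ = (H_{I,I} P)ᵀ`, whence `H = Pᵀ H_{I,I} P` with `H_{I,I}` symmetric.
-/

open Matrix Submodule Set

namespace Matrix
variable {l m n R : Type*}

theorem isSymm_of_eq_submatrix_mul [CommSemiring R] [Fintype m] {H : Matrix n n R} {ι : m → n}
    {P : Matrix m n R} (hP : H = H.submatrix id ι * P) (hsym : ∀ a j, H (ι a) j = H j (ι a)) :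
    H.IsSymm := by
  have hB : (H.submatrix ι ι).IsSymm := by
    ext a b; exact hsym b (ι a)
  have hcols : H.submatrix id ι = (H.submatrix ι id)ᵀ := by
    ext j a; exact (hsym a j).symm
  have hrows : H.submatrix ι id = H.submatrix ι ι * P := by
    conv_lhs => rw [hP]
    rfl
  have hH : H = Pᵀ * H.submatrix ι ι * P := by
    conv_lhs => rw [hP, hcols, hrows, transpose_mul, hB.eq]
  rw [IsSymm, hH, transpose_mul, transpose_mul, transpose_transpose, hB.eq, Matrix.mul_assoc]

variable [CommRing R] [Fintype m]

theorem exists_eq_mul_of_row_mem_span {M : Matrix m n R} {H : Matrix l n R}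
    (hH : ∀ i, H i ∈ span R (range M.row)) : ∃ C : Matrix l m R, H = C * M := by
  choose C hC using fun i => (range_vecMulLinear M ▸ hH i : H i ∈ LinearMap.range M.vecMulLinear)
  exact ⟨C, funext fun i => (hC i).symm⟩

theorem eq_submatrix_mul_nonsing_inv_mul_of_row_mem_span [DecidableEq m] {M : Matrix m n R}
    {ι : m → n} (hM : IsUnit (M.submatrix id ι).det) {H : Matrix l n R}
    (hH : ∀ i, H i ∈ span R (range M.row)) :
    H = H.submatrix id ι * ((M.submatrix id ι)⁻¹ * M) := by
  obtain ⟨C, rfl⟩ := exists_eq_mul_of_row_mem_span hH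
  have : (C * M).submatrix id ι = C * M.submatrix id ι := rfl
  rw [this, ← Matrix.mul_assoc, mul_nonsing_inv_cancel_right _ _ hM]

end Matrix

theorem statement19 {𝔽 : Type*} [Field 𝔽] (q n : ℕ) (v : Fin q → Fin n → 𝔽)
    (I : Finset (Fin n)) (hI : I.card = q)
    -- the `q × q` matrix `M_I` (columns of the matrix `M` with rows `v₁,…,v_q` indexed by `I`)
    -- is invertible
    (hdet : (Matrix.of fun a b => v a (↑(I.orderIsoOfFin hI b))).det ≠ 0)
    (H : Matrix (Fin n) (Fin n) 𝔽)
    -- each row of `H` lies in the span of `v₁,…,v_q`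
    (hrows : ∀ i, (fun j => H i j) ∈ Submodule.span 𝔽 (Set.range v))
    -- `h_{ij} = h_{ji}` for all `i ∈ I` and all `j`
    (hsym : ∀ i ∈ I, ∀ j, H i j = H j i) :
    H.IsSymm := by
  let ι : Fin q → Fin n := fun b => I.orderIsoOfFin hI b
  have hP := eq_submatrix_mul_nonsing_inv_mul_of_row_mem_span (M := Matrix.of v) (ι := ι)
    hdet.isUnit hrows
  exact isSymm_of_eq_submatrix_mul hP fun a => hsym _ (I.orderIsoOfFin hI a).2
end
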